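/- arXiv:2208.06392 — 7 statements merged into one kernel-verified Lean document; each statement's English description precedes it below -/
import Mathlib

section
/- For every natural number k ≥ 0 and formal variable t, the identity ∑_{a=0}^∞ C(a+k-1, k-1)^2 t^{2a} = (1-t^2)^{1-2k} · ∑_{a=0}^{k-1} C(k-1, a)^2 t^{2a} holds as formal power series in t. -/
/-- Binomial coefficient with integer arguments, with the convention that
`binom n m = 0` when `m < 0` or `m > n`. -/
def binom (n m : ℤ) : ℤ := if 0 ≤ m ∧ m ≤ n then n.toNat.choose m.toNat else 0

open PowerSeries

section Combinatorics

open Finset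

lemma vand_range (x y k : ℕ) :
    (x + y).choose k = ∑ i ∈ range (k+1), x.choose i * y.choose (k - i) := by
  rw [Nat.add_choose_eq]
  exact Finset.Nat.sum_antidiagonal_eq_sum_range_succ_mk _ k

lemma sq_inner (m a : ℕ) :
    ∑ s ∈ range (m+1), (m.choose s)^2 * s.choose a = m.choose a * (2*m - a).choose (m - a) := by
  rcases le_or_gt a m with ha | ha
  · have htrim : ∑ s ∈ range (m+1), (m.choose s)^2 * s.choose a
        = ∑ s ∈ Ico a (m+1), (m.choose s)^2 * s.choose a := by
      refine (Finset.sum_subset ?_ ?_).symm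
      · intro x hx; simp only [mem_Ico] at hx; simp only [mem_range]; omega
      · intro x hx hx'
        simp only [mem_range] at hx; simp only [mem_Ico, not_and, not_lt] at hx'
        have : x < a := by omega
        simp [Nat.choose_eq_zero_of_lt this]
    rw [htrim, Finset.sum_Ico_eq_sum_range]
    have hr : m + 1 - a = (m - a) + 1 := by omega
    rw [hr]
    have hterm : ∀ u ∈ range ((m-a)+1),
        (m.choose (a+u))^2 * (a+u).choose a
          = m.choose a * ((m-a).choose u * m.choose ((m-a) - u)) := by
      intro u hu
      simp only [mem_range] at hu
      have h1 : a + u ≤ m := by omega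
      have h2 : a ≤ a + u := by omega
      have key : m.choose (a+u) * (a+u).choose a = m.choose a * (m - a).choose ((a+u) - a) :=
        Nat.choose_mul h2
      have h3 : (a + u) - a = u := by omega
      rw [h3] at key
      calc (m.choose (a+u))^2 * (a+u).choose a
          = m.choose (a+u) * (m.choose (a+u) * (a+u).choose a) := by ring
        _ = m.choose (a+u) * (m.choose a * (m - a).choose u) := by rw [key]
        _ = m.choose a * ((m-a).choose u * m.choose (a+u)) := by ring
        _ = m.choose a * ((m-a).choose u * m.choose (m - (a+u))) := by
              rw [Nat.choose_symm h1]
        _ = m.choose a * ((m-a).choose u * m.choose ((m-a) - u)) := by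
              congr 3; omega
    rw [Finset.sum_congr rfl hterm, ← Finset.mul_sum, ← vand_range]
    congr 2
    omega
  · rw [Nat.choose_eq_zero_of_lt ha]
    simp only [zero_mul]
    refine Finset.sum_eq_zero fun s hs => ?_
    simp only [mem_range] at hs
    have hsa : s < a := by omega
    simp [Nat.choose_eq_zero_of_lt hsa]

lemma suranyi (m p : ℕ) (hp : m ≤ p) :
    ∑ s ∈ range (m+1), (m.choose s)^2 * (p + s).choose (2*m) = (p.choose m)^2 := by
  have expand : ∀ s, (p + s).choose (2*m)
      = ∑ a ∈ range (2*m+1), s.choose a * p.choose (2*m - a) := by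
    intro s; rw [add_comm p s]; exact vand_range s p (2*m)
  calc ∑ s ∈ range (m+1), (m.choose s)^2 * (p + s).choose (2*m)
      = ∑ s ∈ range (m+1), ∑ a ∈ range (2*m+1),
          (m.choose s)^2 * s.choose a * p.choose (2*m - a) := by
        refine Finset.sum_congr rfl fun s _ => ?_
        rw [expand, Finset.mul_sum]
        exact Finset.sum_congr rfl fun a _ => by ring
    _ = ∑ a ∈ range (2*m+1), (∑ s ∈ range (m+1), (m.choose s)^2 * s.choose a)
          * p.choose (2*m - a) := by
        rw [Finset.sum_comm]
        exact Finset.sum_congr rfl fun a _ => (Finset.sum_mul _ _ _).symm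
    _ = ∑ a ∈ range (2*m+1), m.choose a * (2*m - a).choose (m - a) * p.choose (2*m - a) := by
        refine Finset.sum_congr rfl fun a _ => ?_; rw [sq_inner]
    _ = ∑ a ∈ range (2*m+1), m.choose a * (p.choose m * (p - m).choose (m - a)) := by
        refine Finset.sum_congr rfl fun a ha => ?_
        simp only [mem_range] at ha
        rcases le_or_gt a m with ham | ham
        · have hsy : (2*m - a).choose (m - a) = (2*m - a).choose m :=
            Nat.choose_symm_of_eq_add (by omega)
          rw [hsy]
          rcases le_or_gt (2*m - a) p with h2 | h2
          · have := Nat.choose_mul (n := p) (show m ≤ 2*m - a by omega)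
            have h3 : 2*m - a - m = m - a := by omega
            rw [h3] at this
            rw [mul_assoc, mul_comm ((2*m-a).choose m), this]
          · rw [Nat.choose_eq_zero_of_lt (show p - m < m - a by omega),
              Nat.choose_eq_zero_of_lt h2]
            ring
        · rw [Nat.choose_eq_zero_of_lt ham]; ring
    _ = p.choose m * ∑ a ∈ range (2*m+1), m.choose a * (p - m).choose (m - a) := by
        rw [Finset.mul_sum]; exact Finset.sum_congr rfl fun a _ => by ring
    _ = p.choose m * ∑ a ∈ range (m+1), m.choose a * (p - m).choose (m - a) := by
        congr 1
        refine (Finset.sum_subset ?_ ?_).symm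
        · intro x hx; simp only [mem_range] at *; omega
        · intro x hx hx'
          simp only [mem_range] at hx hx'
          rw [Nat.choose_eq_zero_of_lt (show m < x by omega), zero_mul]
    _ = (p.choose m)^2 := by
        rw [← vand_range m (p-m) m]
        have : m + (p - m) = p := by omega
        rw [this]; ring

lemma key_conv (m n : ℕ) :
    ∑ i ∈ range (n+1), (m.choose i)^2 * ((n - i) + 2*m).choose (2*m)
      = ((n+m).choose m)^2 := by
  set h : ℕ → ℕ := fun j => (m.choose (n + m - j))^2 * (j + m).choose (2*m) with hh
  have hA : ∑ j ∈ range (n+m+1), h j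
      = ∑ i ∈ range (n+1), (m.choose i)^2 * ((n - i) + 2*m).choose (2*m) := by
    rw [Finset.range_eq_Ico, ← Finset.sum_Ico_consecutive _ (Nat.zero_le m) (by omega : m ≤ n+m+1)]
    have h0 : ∑ j ∈ Ico 0 m, h j = 0 := by
      refine Finset.sum_eq_zero fun j hj => ?_
      simp only [mem_Ico] at hj
      rw [hh]
      simp only
      rw [Nat.choose_eq_zero_of_lt (show j + m < 2*m by omega), mul_zero]
    rw [h0, zero_add, Finset.sum_Ico_eq_sum_range]
    have hr : n + m + 1 - m = n + 1 := by omega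
    rw [hr]
    rw [← Finset.sum_range_reflect (fun i => (m.choose i)^2 * ((n - i) + 2*m).choose (2*m)) (n+1)]
    refine Finset.sum_congr rfl fun i hi => ?_
    simp only [mem_range] at hi
    rw [hh]
    simp only
    rw [show n + 1 - 1 - i = n - i from by omega,
      show n - (n - i) = i from by omega,
      show n + m - (m + i) = n - i from by omega,
      show m + i + m = i + 2*m from by omega]
  have hB : ∑ j ∈ range (n+m+1), h j
      = ∑ s ∈ range (m+1), (m.choose s)^2 * ((n+m) + s).choose (2*m) := by
    rw [Finset.range_eq_Ico, ← Finset.sum_Ico_consecutive _ (Nat.zero_le n) (by omega : n ≤ n+m+1)]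
    have h0 : ∑ j ∈ Ico 0 n, h j = 0 := by
      refine Finset.sum_eq_zero fun j hj => ?_
      simp only [mem_Ico] at hj
      rw [hh]
      simp only
      rw [Nat.choose_eq_zero_of_lt (show m < n + m - j by omega)]
      ring
    rw [h0, zero_add, Finset.sum_Ico_eq_sum_range]
    have hr : n + m + 1 - n = m + 1 := by omega
    rw [hr]
    refine Finset.sum_congr rfl fun s hs => ?_
    simp only [mem_range] at hs
    rw [hh]
    simp only
    have e1 : n + m - (n + s) = m - s := by omega
    have e2 : n + s + m = n + m + s := by omega
    rw [e1, e2, Nat.choose_symm (by omega : s ≤ m)]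
  rw [← hA, hB, suranyi m (n+m) (by omega)]

end Combinatorics

section Evenify

open Finset

/-- The ring homomorphism `F(X) ↦ F(X²)` on `ℚ⟦X⟧`. -/
noncomputable def evenify : ℚ⟦X⟧ →+* ℚ⟦X⟧ where
  toFun F := PowerSeries.mk fun n => if Even n then (PowerSeries.coeff (n/2)) F else 0
  map_zero' := by ext n; simp
  map_one' := by
    ext n
    simp only [coeff_mk, map_one, coeff_one]
    by_cases h : Even n
    · rw [if_pos h]; rw [Nat.even_iff] at h
      split_ifs <;> first | rfl | (exfalso; omega)
    · rw [if_neg h]; rw [Nat.not_even_iff] at h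
      split_ifs <;> first | rfl | (exfalso; omega)
  map_add' F G := by
    ext n
    simp only [coeff_mk, map_add]
    split_ifs <;> simp
  map_mul' F G := by
    ext n
    simp only [coeff_mk, coeff_mul]
    rcases Nat.even_or_odd n with he | ho
    · rw [if_pos he]
      rw [← Finset.sum_filter_of_ne (p := fun p : ℕ × ℕ => Even p.1)
        (f := fun p : ℕ × ℕ => (if Even p.1 then (coeff (p.1/2)) F else 0) *
          (if Even p.2 then (coeff (p.2/2)) G else 0))]
      · refine Finset.sum_nbij' (i := fun q : ℕ × ℕ => (2*q.1, 2*q.2))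
          (j := fun p : ℕ × ℕ => (p.1/2, p.2/2)) ?_ ?_ ?_ ?_ ?_
        · intro q hq
          simp only [Finset.HasAntidiagonal.mem_antidiagonal] at hq
          simp only [Finset.mem_filter, Finset.HasAntidiagonal.mem_antidiagonal]
          have he2 := Nat.even_iff.mp he
          refine ⟨by omega, even_two_mul _⟩
        · intro p hp
          simp only [Finset.mem_filter, Finset.HasAntidiagonal.mem_antidiagonal] at hp
          simp only [Finset.HasAntidiagonal.mem_antidiagonal]
          obtain ⟨hsum, hev⟩ := hp
          rw [Nat.even_iff] at hev he
          omega
        · intro q hq; simp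
        · intro p hp
          simp only [Finset.mem_filter, Finset.HasAntidiagonal.mem_antidiagonal] at hp
          obtain ⟨hsum, hev⟩ := hp
          rw [Nat.even_iff] at hev he
          have : Even p.2 := by rw [Nat.even_iff]; omega
          rw [Nat.even_iff] at this
          ext <;> simp <;> omega
        · intro q hq
          rw [if_pos (even_two_mul q.1), if_pos (even_two_mul q.2),
            Nat.mul_div_cancel_left _ two_pos, Nat.mul_div_cancel_left _ two_pos]
      · intro p hp hne
        by_contra hodd
        apply hne
        rw [if_neg hodd, zero_mul]
    · rw [if_neg (Nat.not_even_iff_odd.mpr ho)]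
      refine (Finset.sum_eq_zero fun p hp => ?_).symm
      simp only [Finset.HasAntidiagonal.mem_antidiagonal] at hp
      rcases Nat.even_or_odd p.1 with h1 | h1
      · have : ¬ Even p.2 := by
          rw [Nat.even_iff] at h1 ⊢; rw [Nat.odd_iff] at ho; omega
        rw [if_neg this, mul_zero]
      · rw [if_neg (Nat.not_even_iff_odd.mpr h1), zero_mul]

lemma evenify_mk (c : ℕ → ℚ) :
    evenify (PowerSeries.mk c) = PowerSeries.mk fun n => if Even n then c (n/2) else 0 := by
  ext n; simp [evenify]

lemma evenify_X : evenify X = X^2 := by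
  ext n
  simp only [evenify, RingHom.coe_mk, MonoidHom.coe_mk, OneHom.coe_mk, coeff_mk,
    PowerSeries.coeff_X, PowerSeries.coeff_X_pow]
  by_cases h : Even n
  · rw [if_pos h]; rw [Nat.even_iff] at h
    split_ifs <;> first | rfl | (exfalso; omega)
  · rw [if_neg h]; rw [Nat.not_even_iff] at h
    split_ifs <;> first | rfl | (exfalso; omega)

lemma evenify_C (c : ℚ) : evenify (C c) = C c := by
  ext n
  simp only [evenify, RingHom.coe_mk, MonoidHom.coe_mk, OneHom.coe_mk, coeff_mk, coeff_C]
  by_cases h : Even n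
  · rw [if_pos h]; rw [Nat.even_iff] at h
    split_ifs <;> first | rfl | (exfalso; omega)
  · rw [if_neg h]; rw [Nat.not_even_iff] at h
    split_ifs <;> first | rfl | (exfalso; omega)

end Evenify

section Ymain

open Finset

lemma G_eq (m : ℕ) :
    (PowerSeries.mk fun i => ((m.choose i : ℚ))^2)
      = ∑ a ∈ range (m+1), (C ((m.choose a : ℚ)))^2 * X^a := by
  ext n
  rw [map_sum, coeff_mk]
  have : ∀ a ∈ range (m+1), (coeff n) ((C ((m.choose a : ℚ)))^2 * X^a)
      = if n = a then ((m.choose a : ℚ))^2 else 0 := by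
    intro a ha
    rw [← map_pow, coeff_C_mul_X_pow]
  rw [Finset.sum_congr rfl this]
  rcases le_or_gt n m with h | h
  · rw [Finset.sum_ite_eq (range (m+1)) n (fun a => ((m.choose a : ℚ))^2),
      if_pos (by simp [mem_range]; omega)]
  · rw [Finset.sum_ite_eq (range (m+1)) n (fun a => ((m.choose a : ℚ))^2),
      if_neg (by simp [mem_range]; omega), Nat.choose_eq_zero_of_lt h]
    norm_num

lemma Ymain (m : ℕ) :
    (PowerSeries.mk fun a => (((a + m).choose m : ℚ))^2) * (1 - X)^(2*m+2)
      = (1 - X) * ∑ a ∈ range (m+1), (C ((m.choose a : ℚ)))^2 * X^a := by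
  have hF : (PowerSeries.mk fun a => (((a + m).choose m : ℚ))^2)
      = (PowerSeries.mk fun i => ((m.choose i : ℚ))^2)
        * (PowerSeries.mk fun j => (((2*m + j).choose (2*m) : ℚ))) := by
    ext n
    rw [coeff_mk, coeff_mul, Finset.Nat.sum_antidiagonal_eq_sum_range_succ_mk]
    simp only [coeff_mk]
    rw [show ((n + m).choose m : ℚ)^2 = ((((n+m).choose m)^2 : ℕ) : ℚ) by push_cast; ring,
      ← key_conv m n]
    push_cast
    refine (Finset.sum_congr rfl fun i hi => ?_)
    rw [show n - i + 2*m = 2*m + (n - i) from by omega]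
  have hinv : (PowerSeries.mk fun j => (((2*m + j).choose (2*m) : ℚ)))
      * (1 - X)^(2*m+1) = 1 := (PowerSeries.mk_add_choose_mul_one_sub_pow_eq_one ℚ (2*m))
  calc (PowerSeries.mk fun a => (((a + m).choose m : ℚ))^2) * (1 - X)^(2*m+2)
      = (PowerSeries.mk fun i => ((m.choose i : ℚ))^2)
        * ((PowerSeries.mk fun j => (((2*m + j).choose (2*m) : ℚ))) * (1 - X)^(2*m+1))
        * (1 - X) := by rw [hF]; ring
    _ = (1 - X) * ∑ a ∈ range (m+1), (C ((m.choose a : ℚ)))^2 * X^a := by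
        rw [hinv, mul_one, G_eq]; ring

end Ymain

lemma binom_natCast (n a : ℕ) : binom (n : ℤ) (a : ℤ) = (n.choose a : ℤ) := by
  unfold binom
  rcases le_or_gt a n with h | h
  · rw [if_pos ⟨Int.natCast_nonneg a, by exact_mod_cast h⟩]
    simp
  · rw [if_neg (by push_cast; omega), Nat.choose_eq_zero_of_lt h]
    simp

/-- `∑_{a=0}^∞ C(a+k-1, k-1)^2 t^{2a} = (1-t^2)^{1-2k} ∑_{a=0}^{k-1} C(k-1,a)^2 t^{2a}`
as formal power series over ℚ; both sides have been multiplied by `(1-t^2)^{2k}`. -/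
theorem stmt_0 (k : ℕ) :
    (PowerSeries.mk (fun n : ℕ =>
        if Even n then ((binom ((n / 2 : ℕ) + (k : ℤ) - 1) ((k : ℤ) - 1) : ℚ)) ^ 2 else 0)) *
      (1 - (X : ℚ⟦X⟧) ^ 2) ^ (2 * k)
    = (1 - (X : ℚ⟦X⟧) ^ 2) *
        ∑ a ∈ Finset.range k,
          PowerSeries.C ((binom ((k : ℤ) - 1) (a : ℤ) : ℚ)) ^ 2 * X ^ (2 * a) := by
  cases k with
  | zero =>
    have hz : (PowerSeries.mk (fun n : ℕ =>
        if Even n then ((binom ((n / 2 : ℕ) + ((0:ℕ) : ℤ) - 1) (((0:ℕ) : ℤ) - 1) : ℚ)) ^ 2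
          else 0) : ℚ⟦X⟧) = 0 := by
      ext n
      have hb : binom ((n / 2 : ℕ) + ((0:ℕ) : ℤ) - 1) (((0:ℕ) : ℤ) - 1) = 0 := by
        unfold binom
        rw [if_neg]
        rintro ⟨h1, -⟩
        norm_num at h1
      rw [coeff_mk, map_zero]
      split_ifs with h
      · rw [hb]; norm_num
      · rfl
    rw [hz, zero_mul]
    simp
  | succ m =>
    -- identify the left factor
    have hL : (PowerSeries.mk (fun n : ℕ =>
        if Even n then ((binom ((n / 2 : ℕ) + ((m+1:ℕ) : ℤ) - 1) (((m+1:ℕ) : ℤ) - 1) : ℚ)) ^ 2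
          else 0) : ℚ⟦X⟧)
        = evenify (PowerSeries.mk fun a => (((a + m).choose m : ℚ))^2) := by
      rw [evenify_mk]
      ext n
      simp only [coeff_mk]
      congr 1
      have e1 : ((n / 2 : ℕ) : ℤ) + ((m+1:ℕ) : ℤ) - 1 = ((n / 2 + m : ℕ) : ℤ) := by
        push_cast; ring
      have e2 : ((m+1:ℕ) : ℤ) - 1 = ((m : ℕ) : ℤ) := by push_cast; ring
      rw [e1, e2, binom_natCast]
      push_cast
      ring
    have hpow : (1 - (X : ℚ⟦X⟧) ^ 2) ^ (2 * (m+1)) = evenify ((1 - X)^(2*m+2)) := by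
      rw [map_pow, map_sub, map_one, evenify_X]
      ring
    have hR : (1 - (X : ℚ⟦X⟧) ^ 2) *
          ∑ a ∈ Finset.range (m+1),
            PowerSeries.C ((binom (((m+1:ℕ) : ℤ) - 1) (a : ℤ) : ℚ)) ^ 2 * X ^ (2 * a)
        = evenify ((1 - X) *
            ∑ a ∈ Finset.range (m+1), (C ((m.choose a : ℚ)))^2 * X^a) := by
      rw [map_mul, map_sub, map_one, evenify_X, map_sum]
      congr 1
      refine Finset.sum_congr rfl fun a ha => ?_
      rw [map_mul, map_pow, map_pow, evenify_C, evenify_X, ← pow_mul]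
      have e2 : ((m+1:ℕ) : ℤ) - 1 = ((m : ℕ) : ℤ) := by push_cast; ring
      rw [e2, binom_natCast]
      push_cast
      ring
    push_cast at hL hR ⊢
    rw [hL, hR, hpow, ← map_mul]
    exact congrArg evenify (Ymain m)
end

section
/- For every natural number k ≥ 2, the polynomial identity ∑_i C(k-1,i)^2 t^{2i} − ∑_i C(k,i+1)·C(k-2,i) t^{2i+1} = (1-t)^2 · ( ∑_i C(k-2,i)^2 t^{2i} − ∑_i C(k-2,i)·C(k-2,i+1) t^{2i+1} ) holds in ℤ[t]. -/
open Polynomial Finset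

lemma binom_natCast_of_nonneg (n : ℕ) {m : ℤ} (hm : 0 ≤ m) : binom n m = n.choose m.toNat := by
  unfold binom
  split_ifs with h
  · simp
  · have : n < m.toNat := by omega
    simp [Nat.choose_eq_zero_of_lt this]

lemma binom_add_binom_add_one (n : ℕ) (m : ℤ) :
    binom n m + binom n (m + 1) = binom (n + 1 : ℕ) (m + 1) := by
  rcases lt_or_ge m 0 with hm | hm
  · rcases lt_or_ge (m + 1) 0 with hm' | hm'
    · simp [binom, hm.not_ge, hm'.not_ge]
    · obtain rfl : m = -1 := by omega
      norm_num [binom]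
      positivity
  · rw [binom_natCast_of_nonneg n hm, binom_natCast_of_nonneg n (by omega : 0 ≤ m + 1),
      binom_natCast_of_nonneg (n + 1) (by omega : 0 ≤ m + 1),
      show (m + 1).toNat = m.toNat + 1 by omega, Nat.choose_succ_succ]
    push_cast
    ring

lemma sum_range_mul_pow_eq_mul_sum_range_succ {R : Type*} [CommSemiring R] (f : ℕ → R) (s : R)
    {N : ℕ} (h0 : f 0 = 0) (hN : f N = 0) :
    ∑ i ∈ range N, f i * s ^ i = s * ∑ i ∈ range N, f (i + 1) * s ^ i := by
  have h := sum_range_succ' (fun i => f i * s ^ i) N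
  rw [sum_range_succ, hN, h0] at h
  simp only [zero_mul, add_zero] at h
  rw [h, mul_sum]
  exact sum_congr rfl fun i _ => by ring

lemma sum_pascal_sq_sub_sum_eq_one_sub_sq_mul {R : Type*} [CommRing R] (a : ℕ → R) (t : R)
    {N : ℕ} (h0 : a 0 = 0) (hN : a N = 0) :
    ∑ i ∈ range N, (a i + a (i + 1)) ^ 2 * t ^ (2 * i)
      - ∑ i ∈ range N, (a i + 2 * a (i + 1) + a (i + 2)) * a (i + 1) * t ^ (2 * i + 1)
    = (1 - t) ^ 2 * (∑ i ∈ range N, a (i + 1) ^ 2 * t ^ (2 * i)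
      - ∑ i ∈ range N, a (i + 1) * a (i + 2) * t ^ (2 * i + 1)) := by
  have even_pow : ∀ i, t ^ (2 * i) = (t ^ 2) ^ i := pow_mul t 2
  have odd_pow : ∀ i, t ^ (2 * i + 1) = (t ^ 2) ^ i * t := fun i => by rw [pow_succ, pow_mul]
  simp only [odd_pow, even_pow]
  set s := t ^ 2 with hs
  have shift_sq := sum_range_mul_pow_eq_mul_sum_range_succ (N := N) (fun i => a i ^ 2) s
    (by simp [h0]) (by simp [hN])
  have shift_prod := sum_range_mul_pow_eq_mul_sum_range_succ (N := N) (fun i => a i * a (i + 1)) s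
    (by simp [h0]) (by simp [hN])
  have expand_even : ∑ i ∈ range N, (a i + a (i + 1)) ^ 2 * s ^ i
      = ∑ i ∈ range N, a i ^ 2 * s ^ i + 2 * ∑ i ∈ range N, a i * a (i + 1) * s ^ i
        + ∑ i ∈ range N, a (i + 1) ^ 2 * s ^ i := by
    simp only [mul_sum, ← sum_add_distrib]
    exact sum_congr rfl fun i _ => by ring
  have expand_odd : ∑ i ∈ range N, (a i + 2 * a (i + 1) + a (i + 2)) * a (i + 1) * (s ^ i * t)
      = t * (∑ i ∈ range N, a i * a (i + 1) * s ^ i + 2 * ∑ i ∈ range N, a (i + 1) ^ 2 * s ^ i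
        + ∑ i ∈ range N, a (i + 1) * a (i + 2) * s ^ i) := by
    simp only [mul_sum, ← sum_add_distrib]
    exact sum_congr rfl fun i _ => by ring
  have factor_odd : ∑ i ∈ range N, a (i + 1) * a (i + 2) * (s ^ i * t)
      = t * ∑ i ∈ range N, a (i + 1) * a (i + 2) * s ^ i := by
    rw [mul_sum]
    exact sum_congr rfl fun i _ => by ring
  rw [expand_even, expand_odd, factor_odd, shift_sq, shift_prod]
  rw [hs]
  ring

/-- The polynomial identity
`∑_i C(k-1,i)^2 t^{2i} − ∑_i C(k,i+1) C(k-2,i) t^{2i+1}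
  = (1-t)^2 (∑_i C(k-2,i)^2 t^{2i} − ∑_i C(k-2,i) C(k-2,i+1) t^{2i+1})` in `ℤ[t]`,
where all sums are finite (summing over `i < k` captures every nonzero term). -/
theorem stmt_4 (k : ℕ) (hk : 2 ≤ k) :
    (∑ i ∈ Finset.range k, Polynomial.C (binom ((k : ℤ) - 1) (i : ℤ) ^ 2) * X ^ (2 * i))
      - (∑ i ∈ Finset.range k,
          Polynomial.C (binom (k : ℤ) ((i : ℤ) + 1) * binom ((k : ℤ) - 2) (i : ℤ)) *
            X ^ (2 * i + 1))
    = (1 - X : Polynomial ℤ) ^ 2 *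
        ((∑ i ∈ Finset.range k, Polynomial.C (binom ((k : ℤ) - 2) (i : ℤ) ^ 2) * X ^ (2 * i))
          - ∑ i ∈ Finset.range k,
              Polynomial.C (binom ((k : ℤ) - 2) (i : ℤ) * binom ((k : ℤ) - 2) ((i : ℤ) + 1)) *
                X ^ (2 * i + 1)) := by
  obtain ⟨n, rfl⟩ : ∃ n, k = n + 2 := ⟨k - 2, by omega⟩
  set a : ℕ → ℤ := fun j => binom n ((j : ℤ) - 1) with ha
  have binom_n : ∀ i : ℕ, binom n i = a (i + 1) := fun i => by simp [ha]
  have binom_n_succ : ∀ i : ℕ, binom n (i + 1) = a (i + 2) := fun i => by simp [ha]; ring_nf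
  have binom_n_add_one : ∀ i : ℕ, binom (n + 1 : ℕ) i = a i + a (i + 1) := fun i => by
    simpa [ha] using (binom_add_binom_add_one n ((i : ℤ) - 1)).symm
  have binom_n_add_two : ∀ i : ℕ, binom (n + 2 : ℕ) (i + 1) = a i + 2 * a (i + 1) + a (i + 2) :=
    fun i => by
      have binom_n_add_one_succ := binom_n_add_one (i + 1)
      rw [Nat.cast_succ i] at binom_n_add_one_succ
      rw [← binom_add_binom_add_one (n + 1), binom_n_add_one, binom_n_add_one_succ]
      ring
  rw [show ((n + 2 : ℕ) : ℤ) - 1 = (n + 1 : ℕ) by omega, show ((n + 2 : ℕ) : ℤ) - 2 = n by omega]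
  simp only [binom_n, binom_n_succ, binom_n_add_one, binom_n_add_two, map_add, map_mul, map_pow,
    map_ofNat]
  exact sum_pascal_sq_sub_sum_eq_one_sub_sq_mul (fun j => C (a j)) X (by simp [ha, binom])
    (by simp [ha, binom])
end

section
/- For all natural numbers a ≥ 0 and k ≥ 2, C(a+k-1, k-1)^2 − C(a+k, k-1)·C(a+k-2, k-1) = (1/(a+k-1))·C(a+k-1, k-2)·C(a+k-1, k-1). -/
open scoped Nat

lemma binom_nat (n m : ℕ) : binom (n:ℤ) (m:ℤ) = n.choose m := by
  unfold binom
  split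
  · simp
  · next h =>
    have : n < m := by omega
    simp [Nat.choose_eq_zero_of_lt this]

/-- `C(a+k-1,k-1)^2 − C(a+k,k-1) C(a+k-2,k-1) = (1/(a+k-1)) C(a+k-1,k-2) C(a+k-1,k-1)`
as rational numbers, for `k ≥ 2`. -/
theorem stmt_5 (a k : ℕ) (hk : 2 ≤ k) :
    ((binom ((a : ℤ) + k - 1) ((k : ℤ) - 1) : ℚ)) ^ 2
      - (binom ((a : ℤ) + k) ((k : ℤ) - 1) : ℚ) * (binom ((a : ℤ) + k - 2) ((k : ℤ) - 1) : ℚ)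
    = (1 / ((a : ℚ) + k - 1)) * (binom ((a : ℤ) + k - 1) ((k : ℤ) - 2) : ℚ) *
        (binom ((a : ℤ) + k - 1) ((k : ℤ) - 1) : ℚ) := by
  obtain ⟨s, rfl⟩ : ∃ s, k = s + 2 := ⟨k - 2, by omega⟩
  have e1 : (a:ℤ) + (↑(s+2):ℤ) - 1 = ((a+s+1 : ℕ):ℤ) := by push_cast; ring
  have e2 : (a:ℤ) + (↑(s+2):ℤ) = ((a+s+2 : ℕ):ℤ) := by push_cast; ring
  have e3 : (a:ℤ) + (↑(s+2):ℤ) - 2 = ((a+s : ℕ):ℤ) := by push_cast; ring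
  have e4 : ((↑(s+2):ℤ)) - 1 = ((s+1 : ℕ):ℤ) := by push_cast; ring
  have e5 : ((↑(s+2):ℤ)) - 2 = ((s : ℕ):ℤ) := by push_cast; ring
  rw [e1, e3, e2, e4, e5, binom_nat, binom_nat, binom_nat, binom_nat]
  have hden : ((a:ℚ) + ((s+2:ℕ):ℚ) - 1) = ((a+s+1 : ℕ):ℚ) := by push_cast; ring
  rw [hden]
  rcases Nat.eq_zero_or_pos a with rfl | ha
  · simp [Nat.choose_self, Nat.choose_succ_self, Nat.choose_succ_self_right]
    field_simp
  · obtain ⟨b, rfl⟩ : ∃ b, a = b + 1 := ⟨a - 1, by omega⟩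
    push_cast [Nat.cast_choose ℚ (show s+1 ≤ b+1+s+1 by omega),
      Nat.cast_choose ℚ (show s+1 ≤ b+1+s+2 by omega),
      Nat.cast_choose ℚ (show s+1 ≤ b+1+s by omega),
      Nat.cast_choose ℚ (show s ≤ b+1+s+1 by omega)]
    have h1 : b+1+s - s = b + 1 := by omega
    have h2 : b+1+s+1 - s = b + 2 := by omega
    have h3 : b+1+s - (s+1) = b := by omega
    rw [h1, h2, h3]
    have f1 : (b+1+s+1) ! = (b+s+2) * (b+s+1) ! := by
      have : b+1+s+1 = (b+s+1)+1 := by omega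
      rw [this, Nat.factorial_succ]
    have f2 : (b+1+s+2) ! = (b+s+3) * ((b+s+2) * (b+s+1) !) := by
      have : b+1+s+2 = (b+s+2)+1 := by omega
      rw [this, Nat.factorial_succ, show b+s+2 = (b+s+1)+1 from rfl, Nat.factorial_succ]
    have f3 : (b+1+s) ! = (b+s+1) ! := by congr 1; omega
    have f4 : (b+1) ! = (b+1) * b ! := Nat.factorial_succ b
    have f5 : (b+2) ! = (b+2) * ((b+1) * b !) := by
      rw [Nat.factorial_succ, Nat.factorial_succ]
    have f6 : (s+1) ! = (s+1) * s ! := Nat.factorial_succ s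
    rw [f1, f2, f3, f4, f5, f6]
    have hb : (b ! : ℚ) ≠ 0 := by positivity
    have hs : (s ! : ℚ) ≠ 0 := by positivity
    have hn : ((b+s+1) ! : ℚ) ≠ 0 := by positivity
    push_cast
    field_simp
    ring
end

section
/- For every natural number k ≥ 3, the identity ∑_{a=0}^∞ (1/(a+k-1))·C(a+k-1, k-2)·C(a+k-1, k-1)·t^a = (1-t)^{3-2k} · ∑_{i} (1/(k-2))·C(k-2, i)·C(k-2, i+1)·t^i holds as formal power series over ℚ. -/
lemma binom_zero {p q : ℤ} (h : ¬(0 ≤ q ∧ q ≤ p)) : binom p q = 0 := if_neg h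

lemma binom_coe (p q : ℕ) : binom p q = (p.choose q : ℤ) := by
  unfold binom
  split_ifs with h
  · simp
  · have : p < q := by omega
    simp [Nat.choose_eq_zero_of_lt this]

-- absorption 1: i * C(n+1, i) = (n+1) * C(n, i-1), all i : ℤ
lemma binom_abs1 (n : ℕ) (i : ℤ) :
    i * binom ((n : ℤ) + 1) i = ((n : ℤ) + 1) * binom n (i - 1) := by
  by_cases h : 1 ≤ i ∧ i ≤ (n : ℤ) + 1
  · obtain ⟨j, rfl⟩ : ∃ j : ℕ, i = (j : ℤ) + 1 := ⟨(i - 1).toNat, by omega⟩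
    have hj : j ≤ n := by omega
    have h1 : ((n : ℤ) + 1) = ((n + 1 : ℕ) : ℤ) := by push_cast; ring
    have h2 : ((j : ℤ) + 1) = ((j + 1 : ℕ) : ℤ) := by push_cast; ring
    have h3 : ((j : ℤ) + 1 - 1) = (j : ℤ) := by ring
    rw [h3, h1, h2, binom_coe, binom_coe]
    have := Nat.add_one_mul_choose_eq n j
    push_cast at this ⊢
    linarith [this]
  · by_cases hi : i = 0
    · subst hi
      have h0 : (0:ℤ) - 1 = -1 := by ring
      rw [h0, binom_zero (p := (n:ℤ)) (q := (-1 : ℤ)) (by omega)]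
      ring
    · rw [binom_zero (p := (n:ℤ)) (by omega), binom_zero (p := (n:ℤ)+1) (by omega)]
      ring

lemma choose_core (n j : ℕ) (hj : j ≤ n) :
    ((n:ℤ) + 1 - j) * ((n+1).choose j : ℤ) = ((n:ℤ) + 1) * (n.choose j : ℤ) := by
  have h1 : (n+1).choose (n + 1 - j) = (n+1).choose j := Nat.choose_symm (by omega)
  have h2 : n.choose (n - j) = n.choose j := Nat.choose_symm hj
  have h3 := Nat.add_one_mul_choose_eq n (n - j)
  have h4 : n - j + 1 = n + 1 - j := by omega
  rw [h4, h1, h2] at h3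
  have h7 := congrArg (Nat.cast (R := ℤ)) h3
  push_cast [Nat.cast_sub (show j ≤ n + 1 by omega)] at h7
  linarith

lemma binom_abs2 (n : ℕ) (i : ℤ) :
    ((n : ℤ) + 1 - i) * binom ((n : ℤ) + 1) i = ((n : ℤ) + 1) * binom n i := by
  by_cases h : 0 ≤ i ∧ i ≤ (n : ℤ)
  · obtain ⟨j, rfl⟩ : ∃ j : ℕ, i = (j : ℤ) := ⟨i.toNat, by omega⟩
    have hj : j ≤ n := by omega
    have h1 : ((n : ℤ) + 1) = ((n + 1 : ℕ) : ℤ) := by push_cast; ring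
    rw [h1, binom_coe, binom_coe]
    push_cast
    have := choose_core n j hj
    push_cast at this
    linarith
  · by_cases hi : i = (n:ℤ) + 1
    · subst hi
      rw [binom_zero (p := (n:ℤ)) (by omega)]
      ring
    · rw [binom_zero (p := (n:ℤ)) (by omega), binom_zero (p := (n:ℤ)+1) (by omega)]
      ring

lemma binom_abs3 (m : ℤ) (r : ℕ) :
    (m + 1 - r) * binom (m + 1) r = (m + 1) * binom m r := by
  by_cases h : (r : ℤ) ≤ m
  · obtain ⟨p, rfl⟩ : ∃ p : ℕ, m = (p : ℤ) := ⟨m.toNat, by omega⟩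
    have h1 : (p : ℤ) + 1 = ((p + 1 : ℕ) : ℤ) := by push_cast; ring
    rw [h1, binom_coe, binom_coe]
    have := choose_core p r (by omega)
    push_cast at this ⊢
    linarith
  · by_cases hm : (r : ℤ) = m + 1
    · rw [binom_zero (p := m) (by omega)]
      rw [← hm]
      ring
    · rw [binom_zero (p := m) (by omega), binom_zero (p := m + 1) (by omega)]
      ring

lemma idstep (n : ℕ) (a i : ℤ) :
    binom ((n:ℤ)+1) i * binom ((n:ℤ)+1) (i+1) *
      ((a+1)*(a+2)*binom (a - i + 2*(n:ℤ) + 3) ((2*n+2 : ℕ) : ℤ)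
        - (a+(n:ℤ)+2)*(a+(n:ℤ)+3)*binom (a - i + 2*(n:ℤ) + 2) ((2*n+2 : ℕ) : ℤ))
    = ((n:ℤ)+1)^2 * (binom (n:ℤ) (i-1) * binom (n:ℤ) i * binom (a - i + 2*(n:ℤ) + 3) ((2*n+2 : ℕ) : ℤ)
        - binom (n:ℤ) i * binom (n:ℤ) (i+1) * binom (a - i + 2*(n:ℤ) + 2) ((2*n+2 : ℕ) : ℤ)) := by
  have h1 := binom_abs1 n i
  have h3 := binom_abs1 n (i+1)
  have ei : i + 1 - 1 = i := by ring
  rw [ei] at h3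
  have h2 := binom_abs2 n i
  have h4 := binom_abs2 n (i+1)
  have h5 := binom_abs3 (a - i + 2*(n:ℤ) + 2) (2*n+2)
  have e2 : a - i + 2*(n:ℤ) + 2 + 1 = a - i + 2*(n:ℤ) + 3 := by ring
  rw [e2] at h5
  have e5 : ((2*n+2 : ℕ) : ℤ) = 2*(n:ℤ) + 2 := by push_cast; ring
  rw [e5] at h5 ⊢
  have e13 : (i * binom ((n:ℤ)+1) i) * ((i+1) * binom ((n:ℤ)+1) (i+1))
      = (((n:ℤ)+1) * binom (n:ℤ) (i-1)) * (((n:ℤ)+1) * binom (n:ℤ) i) := by rw [h1, h3]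
  have e24 : ((((n:ℤ)+1) - i) * binom ((n:ℤ)+1) i) * ((((n:ℤ)+1) - (i+1)) * binom ((n:ℤ)+1) (i+1))
      = (((n:ℤ)+1) * binom (n:ℤ) i) * (((n:ℤ)+1) * binom (n:ℤ) (i+1)) := by rw [h2, h4]
  linear_combination (binom (a - i + 2*(n:ℤ) + 3) (2*(n:ℤ)+2)) * e13
    - (binom (a - i + 2*(n:ℤ) + 2) (2*(n:ℤ)+2)) * e24
    + (binom ((n:ℤ)+1) i * binom ((n:ℤ)+1) (i+1) * (a+i+2)) * h5

def nar (n : ℕ) (i : ℤ) : ℚ :=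
  (1/((n:ℚ)+1)) * (binom ((n:ℤ)+1) i : ℚ) * (binom ((n:ℤ)+1) (i+1) : ℚ)

def fval (n a : ℕ) : ℚ :=
  (1/((a:ℚ)+(n:ℚ)+2)) * (binom ((a:ℤ)+(n:ℤ)+2) ((n:ℤ)+1) : ℚ) * (binom ((a:ℤ)+(n:ℤ)+2) ((n:ℤ)+2) : ℚ)

def gsum (n : ℕ) (a : ℤ) (M : ℕ) : ℚ :=
  ∑ i ∈ Finset.range M, nar n i * (binom (a - i + 2*(n:ℤ) + 2) (2*(n:ℤ)+2) : ℚ)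

def Tt (n : ℕ) (a : ℤ) (j : ℕ) : ℚ :=
  ((n:ℚ)+1) * (binom (n:ℤ) ((j:ℤ)-1) : ℚ) * (binom (n:ℤ) (j:ℤ) : ℚ) *
    (binom (a - j + 2*(n:ℤ) + 3) (2*(n:ℤ)+2) : ℚ)

lemma step_term (n : ℕ) (a : ℤ) (i : ℕ) :
    ((a:ℚ)+1)*((a:ℚ)+2) * (nar n i * (binom (a + 1 - i + 2*(n:ℤ) + 2) (2*(n:ℤ)+2) : ℚ))
      - ((a:ℚ)+(n:ℚ)+2)*((a:ℚ)+(n:ℚ)+3) * (nar n i * (binom (a - i + 2*(n:ℤ) + 2) (2*(n:ℤ)+2) : ℚ))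
    = Tt n a i - Tt n a (i+1) := by
  have hq := congrArg (fun z : ℤ => (z : ℚ)) (idstep n a i)
  push_cast at hq
  unfold nar Tt
  push_cast
  rw [show a + 1 - (i:ℤ) + 2*(n:ℤ) + 2 = a - i + 2*(n:ℤ) + 3 from by ring]
  rw [show a - ((i:ℤ)+1) + 2*(n:ℤ) + 3 = a - i + 2*(n:ℤ) + 2 from by ring]
  rw [show (i:ℤ) + 1 - 1 = (i:ℤ) from by ring]
  have hn : ((n:ℚ)+1) ≠ 0 := by positivity
  field_simp
  linear_combination hq

lemma Tt_zero (n : ℕ) (a : ℤ) : Tt n a 0 = 0 := by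
  unfold Tt
  rw [show ((0:ℕ):ℤ) - 1 = -1 from by norm_num]
  rw [binom_zero (p := (n:ℤ)) (q := (-1:ℤ)) (by omega)]
  push_cast
  ring

lemma Tt_top (n : ℕ) (a : ℤ) : Tt n a (n+2) = 0 := by
  unfold Tt
  rw [show (((n+2:ℕ)):ℤ) - 1 = (n:ℤ)+1 from by push_cast; ring]
  rw [binom_zero (p := (n:ℤ)) (q := (n:ℤ)+1) (by omega)]
  push_cast
  ring

lemma grec (n : ℕ) (a : ℤ) :
    ((a:ℚ)+1)*((a:ℚ)+2) * gsum n (a+1) (n+2)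
      = ((a:ℚ)+(n:ℚ)+2)*((a:ℚ)+(n:ℚ)+3) * gsum n a (n+2) := by
  unfold gsum
  rw [Finset.mul_sum, Finset.mul_sum, ← sub_eq_zero, ← Finset.sum_sub_distrib]
  have h : ∀ i ∈ Finset.range (n+2),
      ((a:ℚ)+1)*((a:ℚ)+2) * (nar n i * (binom (a + 1 - i + 2*(n:ℤ) + 2) (2*(n:ℤ)+2) : ℚ))
        - ((a:ℚ)+(n:ℚ)+2)*((a:ℚ)+(n:ℚ)+3) * (nar n i * (binom (a - i + 2*(n:ℤ) + 2) (2*(n:ℤ)+2) : ℚ))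
      = Tt n a i - Tt n a (i+1) := fun i _ => step_term n a i
  rw [Finset.sum_congr rfl h, Finset.sum_range_sub' (Tt n a) (n+2), Tt_zero, Tt_top]
  ring

lemma frec (n a : ℕ) :
    ((a:ℚ)+1)*((a:ℚ)+2) * fval n (a+1) = ((a:ℚ)+(n:ℚ)+2)*((a:ℚ)+(n:ℚ)+3) * fval n a := by
  unfold fval
  have k1 := binom_abs3 ((a:ℤ)+(n:ℤ)+2) (n+1)
  have k2 := binom_abs3 ((a:ℤ)+(n:ℤ)+2) (n+2)
  push_cast at k1 k2
  rw [show (a:ℤ)+(n:ℤ)+2+1 = (a:ℤ)+(n:ℤ)+3 from by ring] at k1 k2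
  push_cast
  rw [show (a:ℤ)+1+(n:ℤ)+2 = (a:ℤ)+(n:ℤ)+3 from by ring]
  have hq1 := congrArg (fun z : ℤ => (z : ℚ)) k1
  have hq2 := congrArg (fun z : ℤ => (z : ℚ)) k2
  push_cast at hq1 hq2
  have h12 : (((a:ℚ)+(n:ℚ)+3 - ((n:ℚ)+1)) * (binom ((a:ℤ)+(n:ℤ)+3) ((n:ℤ)+1) : ℚ))
      * (((a:ℚ)+(n:ℚ)+3 - ((n:ℚ)+2)) * (binom ((a:ℤ)+(n:ℤ)+3) ((n:ℤ)+2) : ℚ))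
      = (((a:ℚ)+(n:ℚ)+3) * (binom ((a:ℤ)+(n:ℤ)+2) ((n:ℤ)+1) : ℚ))
      * (((a:ℚ)+(n:ℚ)+3) * (binom ((a:ℤ)+(n:ℤ)+2) ((n:ℤ)+2) : ℚ)) := by
    rw [hq1, hq2]
  have hne1 : ((a:ℚ)+(n:ℚ)+3) ≠ 0 := by positivity
  have hne2 : ((a:ℚ)+(n:ℚ)+2) ≠ 0 := by positivity
  have e1 : ((a:ℚ)+(n:ℚ)+3) * (1/((a:ℚ)+(n:ℚ)+3)) = 1 := by field_simp
  have e2 : ((a:ℚ)+(n:ℚ)+2) * (1/((a:ℚ)+(n:ℚ)+2)) = 1 := by field_simp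
  linear_combination (1/((a:ℚ)+(n:ℚ)+3)) * h12
    + ((a:ℚ)+(n:ℚ)+3) * (binom ((a:ℤ)+(n:ℤ)+2) ((n:ℤ)+1) : ℚ) * (binom ((a:ℤ)+(n:ℤ)+2) ((n:ℤ)+2) : ℚ) * e1
    - ((a:ℚ)+(n:ℚ)+3) * (binom ((a:ℤ)+(n:ℤ)+2) ((n:ℤ)+1) : ℚ) * (binom ((a:ℤ)+(n:ℤ)+2) ((n:ℤ)+2) : ℚ) * e2

lemma fval_zero (n : ℕ) : fval n 0 = 1 := by
  unfold fval
  rw [show ((0:ℕ):ℤ)+(n:ℤ)+2 = ((n+2:ℕ):ℤ) from by push_cast; ring]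
  rw [show (n:ℤ)+1 = ((n+1:ℕ):ℤ) from by push_cast; ring]
  rw [show (n:ℤ)+2 = ((n+2:ℕ):ℤ) from by push_cast; ring]
  rw [binom_coe, binom_coe, Nat.choose_self]
  rw [show (n+2).choose (n+1) = n+2 from by
    have := Nat.choose_succ_self_right (n+1)
    simpa using this]
  push_cast
  have : ((n:ℚ)+2) ≠ 0 := by positivity
  field_simp
  ring

lemma gsum_zero (n : ℕ) : gsum n 0 (n+2) = 1 := by
  unfold gsum
  rw [Finset.sum_eq_single 0]
  · unfold nar
    rw [show (0:ℤ) - ((0:ℕ):ℤ) + 2*(n:ℤ) + 2 = ((2*n+2:ℕ):ℤ) from by omega]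
    rw [show 2*(n:ℤ)+2 = ((2*n+2:ℕ):ℤ) from by omega]
    rw [binom_coe, Nat.choose_self]
    rw [show ((0:ℕ):ℤ) + 1 = ((1:ℕ):ℤ) from by omega]
    rw [show ((n:ℤ)+1) = ((n+1:ℕ):ℤ) from by omega]
    rw [binom_coe, binom_coe, Nat.choose_one_right]
    simp only [Nat.choose_zero_right]
    push_cast
    have : ((n:ℚ)+1) ≠ 0 := by positivity
    field_simp
  · intro i _ hi
    rw [binom_zero (by omega : ¬(0 ≤ 2*(n:ℤ)+2 ∧ 2*(n:ℤ)+2 ≤ (0:ℤ) - i + 2*(n:ℤ) + 2))]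
    push_cast
    ring
  · intro h
    exact absurd (Finset.mem_range.mpr (by omega)) h

lemma star (n a : ℕ) : fval n a = gsum n (a:ℤ) (n+2) := by
  induction a with
  | zero => rw [fval_zero]; exact_mod_cast (gsum_zero n).symm
  | succ a ih =>
    have hg := grec n (a:ℤ)
    push_cast at hg
    have hf := frec n a
    rw [ih] at hf
    have hcan : ((a:ℚ)+1)*((a:ℚ)+2) ≠ 0 := by positivity
    have : ((a:ℚ)+1)*((a:ℚ)+2) * fval n (a+1) = ((a:ℚ)+1)*((a:ℚ)+2) * gsum n ((a:ℤ)+1) (n+2) := by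
      rw [hf, hg]
    have h2 := mul_left_cancel₀ hcan this
    rw [h2]
    norm_cast

lemma nar_eq_zero (n : ℕ) (i : ℤ) (h : (n:ℤ) + 1 ≤ i) : nar n i = 0 := by
  unfold nar
  rw [binom_zero (p := (n:ℤ)+1) (q := i+1) (by omega)]
  push_cast
  ring

lemma bridge (n a : ℕ) :
    ∑ j ∈ Finset.range (a+1),
      (if j ∈ Finset.range (n+3) then nar n (j:ℤ) else 0) * (((2*n+2 + (a-j)).choose (2*n+2) : ℕ) : ℚ)
    = fval n a := by
  rw [star n a]
  have h1 : ∀ j ∈ Finset.range (a+1),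
      (if j ∈ Finset.range (n+3) then nar n (j:ℤ) else 0) * (((2*n+2 + (a-j)).choose (2*n+2) : ℕ) : ℚ)
        = nar n (j:ℤ) * (binom ((a:ℤ) - (j:ℤ) + 2*(n:ℤ) + 2) (2*(n:ℤ)+2) : ℚ) := by
    intro j hj
    have hja : j ≤ a := by
      have := Finset.mem_range.mp hj; omega
    have hb := binom_coe (2*n+2 + (a-j)) (2*n+2)
    rw [show ((2*n+2 + (a-j) : ℕ) : ℤ) = (a:ℤ) - (j:ℤ) + 2*(n:ℤ) + 2 from by omega,
        show ((2*n+2 : ℕ) : ℤ) = 2*(n:ℤ)+2 from by omega] at hb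
    have hch : (((2*n+2 + (a-j)).choose (2*n+2) : ℕ) : ℚ)
        = (binom ((a:ℤ) - (j:ℤ) + 2*(n:ℤ) + 2) (2*(n:ℤ)+2) : ℚ) := by
      exact_mod_cast congrArg (fun z : ℤ => (z:ℚ)) hb.symm
    rw [hch]
    by_cases hjn : j ∈ Finset.range (n+3)
    · rw [if_pos hjn]
    · have hjn' : n + 3 ≤ j := by
        by_contra hcon
        exact hjn (Finset.mem_range.mpr (by omega))
      rw [if_neg hjn, nar_eq_zero n (j:ℤ) (by push_cast; omega)]
  rw [Finset.sum_congr rfl h1]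
  unfold gsum
  have e1 : ∑ j ∈ Finset.range (a+1), nar n (j:ℤ) * (binom ((a:ℤ) - (j:ℤ) + 2*(n:ℤ) + 2) (2*(n:ℤ)+2) : ℚ)
      = ∑ j ∈ Finset.range (a+n+3), nar n (j:ℤ) * (binom ((a:ℤ) - (j:ℤ) + 2*(n:ℤ) + 2) (2*(n:ℤ)+2) : ℚ) := by
    apply Finset.sum_subset (Finset.range_subset_range.mpr (by omega))
    intro j _ hj
    have hj' : a + 1 ≤ j := by
      by_contra hcon
      exact hj (Finset.mem_range.mpr (by omega))
    rw [binom_zero (by omega : ¬(0 ≤ 2*(n:ℤ)+2 ∧ 2*(n:ℤ)+2 ≤ (a:ℤ) - (j:ℤ) + 2*(n:ℤ) + 2))]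
    push_cast
    ring
  have e2 : ∑ j ∈ Finset.range (n+2), nar n (j:ℤ) * (binom ((a:ℤ) - (j:ℤ) + 2*(n:ℤ) + 2) (2*(n:ℤ)+2) : ℚ)
      = ∑ j ∈ Finset.range (a+n+3), nar n (j:ℤ) * (binom ((a:ℤ) - (j:ℤ) + 2*(n:ℤ) + 2) (2*(n:ℤ)+2) : ℚ) := by
    apply Finset.sum_subset (Finset.range_subset_range.mpr (by omega))
    intro j _ hj
    have hj' : n + 2 ≤ j := by
      by_contra hcon
      exact hj (Finset.mem_range.mpr (by omega))
    rw [nar_eq_zero n (j:ℤ) (by push_cast; omega), zero_mul]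
  rw [e1, e2]

open PowerSeries

lemma hPU (n : ℕ) :
    PowerSeries.mk (fun a : ℕ => fval n a)
      = (∑ i ∈ Finset.range (n+3), PowerSeries.C (R := ℚ) (nar n (i:ℤ)) * X^i) *
          (PowerSeries.invOneSubPow ℚ (2*n+2+1)).val := by
  ext a
  rw [PowerSeries.coeff_mk, PowerSeries.invOneSubPow_val_succ_eq_mk_add_choose,
    PowerSeries.coeff_mul, Finset.Nat.sum_antidiagonal_eq_sum_range_succ_mk]
  rw [← bridge n a]
  apply Finset.sum_congr rfl
  intro j hj
  rw [PowerSeries.coeff_mk]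
  congr 1
  rw [map_sum]
  simp only [PowerSeries.coeff_C_mul_X_pow]
  rw [Finset.sum_ite_eq (Finset.range (n+3)) j (fun i => nar n (i:ℤ))]

lemma main_eq (n : ℕ) :
    PowerSeries.mk (fun a : ℕ => fval n a) * (1 - X : ℚ⟦X⟧)^(2*n+2+1)
      = ∑ i ∈ Finset.range (n+3), PowerSeries.C (R := ℚ) (nar n (i:ℤ)) * X^i := by
  rw [hPU n, mul_assoc, ← PowerSeries.invOneSubPow_inv_eq_one_sub_pow ℚ (2*n+2+1),
    (PowerSeries.invOneSubPow ℚ (2*n+2+1)).val_inv, mul_one]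

open PowerSeries

/-- `∑_{a=0}^∞ (1/(a+k-1)) C(a+k-1,k-2) C(a+k-1,k-1) t^a
      = (1-t)^{3-2k} ∑_i (1/(k-2)) C(k-2,i) C(k-2,i+1) t^i`
as formal power series over ℚ, for `k ≥ 3`; both sides multiplied by `(1-t)^{2k}`. -/
theorem stmt_6 (k : ℕ) (hk : 3 ≤ k) :
    (PowerSeries.mk (fun a : ℕ =>
        (1 / ((a : ℚ) + k - 1)) * (binom ((a : ℤ) + k - 1) ((k : ℤ) - 2) : ℚ) *
          (binom ((a : ℤ) + k - 1) ((k : ℤ) - 1) : ℚ))) *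
      (1 - (X : ℚ⟦X⟧)) ^ (2 * k)
    = (1 - (X : ℚ⟦X⟧)) ^ 3 *
        ∑ i ∈ Finset.range k,
          PowerSeries.C (R := ℚ)
              ((1 / ((k : ℚ) - 2)) * (binom ((k : ℤ) - 2) (i : ℤ) : ℚ) *
                (binom ((k : ℤ) - 2) ((i : ℤ) + 1) : ℚ)) *
            X ^ i := by
  obtain ⟨n, rfl⟩ : ∃ n, k = n + 3 := ⟨k - 3, by omega⟩
  have efun : (fun a : ℕ =>
      (1 / ((a : ℚ) + (n+3 : ℕ) - 1)) * (binom ((a : ℤ) + (n+3 : ℕ) - 1) (((n+3 : ℕ) : ℤ) - 2) : ℚ) *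
        (binom ((a : ℤ) + (n+3 : ℕ) - 1) (((n+3 : ℕ) : ℤ) - 1) : ℚ)) = fun a : ℕ => fval n a := by
    funext a
    unfold fval
    push_cast
    rw [show (a:ℤ) + ((n:ℤ)+3) - 1 = (a:ℤ)+(n:ℤ)+2 from by ring]
    rw [show ((n:ℤ)+3) - 2 = (n:ℤ)+1 from by ring]
    rw [show ((n:ℤ)+3) - 1 = (n:ℤ)+2 from by ring]
    rw [show (a:ℚ) + ((n:ℚ)+3) - 1 = (a:ℚ)+(n:ℚ)+2 from by ring]
  have esum : ∀ i ∈ Finset.range (n+3),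
      PowerSeries.C (R := ℚ) ((1 / (((n+3:ℕ) : ℚ) - 2)) * (binom (((n+3:ℕ) : ℤ) - 2) (i : ℤ) : ℚ) *
          (binom (((n+3:ℕ) : ℤ) - 2) ((i : ℤ) + 1) : ℚ)) * X ^ i
        = PowerSeries.C (R := ℚ) (nar n (i:ℤ)) * X ^ i := by
    intro i _
    congr 2
    unfold nar
    push_cast
    rw [show ((n:ℤ)+3) - 2 = (n:ℤ)+1 from by ring]
    rw [show ((n:ℚ)+3) - 2 = (n:ℚ)+1 from by ring]
  rw [efun, Finset.sum_congr rfl esum]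
  rw [show 2*(n+3) = (2*n+2+1) + 3 from by ring, pow_add, ← mul_assoc, main_eq n]
  ring
end

section
/- Let f, g ∈ ℝ[x] with f(1) ≠ 0, g(1) ≠ 0, suppose all complex roots of g lie on the unit circle with multiplicity strictly less than d, and let f(x)/((1-x)^d g(x)) = ∑ a_n x^n as a power series. Then a_n / n^{d-1} converges to f(1)/((d-1)! · g(1)) as n → ∞. -/
open Polynomial Filter

open PowerSeries Finset

lemma aux_tend0 (k l : ℕ) (hkl : k < l) (b : ℝ) (hb : 0 ≤ b) :
    Tendsto (fun n : ℕ => ((n : ℝ) + b) ^ k / (n : ℝ) ^ l) atTop (nhds 0) := by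
  have hg : Tendsto (fun n : ℕ => (2:ℝ) ^ k / (n : ℝ) ^ (l - k)) atTop (nhds 0) := by
    apply Tendsto.div_atTop tendsto_const_nhds
    exact (tendsto_pow_atTop (by omega)).comp tendsto_natCast_atTop_atTop
  apply squeeze_zero' (g := fun n : ℕ => (2:ℝ) ^ k / (n : ℝ) ^ (l - k))
  · filter_upwards [eventually_ge_atTop 1] with n hn
    positivity
  · filter_upwards [eventually_ge_atTop (Nat.ceil b + 1)] with n hn
    have hn1 : (1:ℝ) ≤ (n:ℝ) := by
      have : (1:ℕ) ≤ n := le_trans (by omega) hn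
      exact_mod_cast this
    have hnb : b ≤ (n:ℝ) := le_trans (Nat.le_ceil b) (by exact_mod_cast le_trans (by omega) hn)
    have hnum : ((n:ℝ) + b) ^ k ≤ (2:ℝ)^k * (n:ℝ)^k := by
      rw [← mul_pow]
      apply pow_le_pow_left₀ (by positivity)
      linarith
    have hsplit : (n:ℝ) ^ l = (n:ℝ)^(l-k) * (n:ℝ)^k := by
      rw [← pow_add]; congr 1; omega
    rw [div_le_div_iff₀ (by positivity) (by positivity), hsplit]
    calc ((n:ℝ)+b)^k * (n:ℝ)^(l-k) ≤ (2:ℝ)^k * (n:ℝ)^k * (n:ℝ)^(l-k) := by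
          apply mul_le_mul_of_nonneg_right hnum (by positivity)
      _ = 2^k * ((n:ℝ)^(l-k) * (n:ℝ)^k) := by ring
  · exact hg

lemma asc_prod : ∀ (k n : ℕ), (n+1).ascFactorial k = ∏ i ∈ range k, (n + 1 + i)
  | 0, n => by simp
  | (k+1), n => by
      rw [Nat.ascFactorial, prod_range_succ, asc_prod k n, Nat.mul_comm]

lemma limA (d : ℕ) (hd : 1 ≤ d) :
    Tendsto (fun n : ℕ => ((d - 1 + n).choose (d - 1) : ℝ) / (n:ℝ) ^ (d - 1)) atTop
      (nhds (1 / (d-1).factorial)) := by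
  have key : ∀ n : ℕ, ((d - 1 + n).choose (d-1) : ℝ) =
      (∏ i ∈ range (d-1), ((n:ℝ) + 1 + i)) / (d-1).factorial := by
    intro n
    have h1 := Nat.ascFactorial_eq_factorial_mul_choose n (d-1)
    rw [asc_prod] at h1
    have h2 : ((∏ i ∈ range (d-1), (n + 1 + i) : ℕ) : ℝ)
        = ((d-1).factorial : ℝ) * ((n + (d-1)).choose (d-1) : ℝ) := by
      rw [h1]; push_cast; ring
    push_cast at h2
    rw [Nat.add_comm (d-1) n]
    field_simp at h2 ⊢
    linarith [h2]
  have hfac : ∀ i : ℕ, Tendsto (fun n : ℕ => ((n:ℝ) + 1 + i) / (n:ℝ)) atTop (nhds 1) := by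
    intro i
    have : Tendsto (fun n : ℕ => 1 + (1 + (i:ℝ)) / (n:ℝ)) atTop (nhds (1 + 0)) :=
      tendsto_const_nhds.add (tendsto_const_div_atTop_nhds_zero_nat _)
    rw [add_zero] at this
    apply this.congr'
    filter_upwards [eventually_ge_atTop 1] with n hn
    have hn0 : (n:ℝ) ≠ 0 := by positivity
    field_simp
    ring
  have hprod : Tendsto (fun n : ℕ => ∏ i ∈ range (d-1), (((n:ℝ) + 1 + i) / (n:ℝ))) atTop
      (nhds 1) := by
    have := tendsto_finset_prod (f := fun (i : ℕ) (n : ℕ) => ((n:ℝ) + 1 + i) / (n:ℝ))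
      (a := fun _ => (1:ℝ)) (range (d-1)) (fun i _ => hfac i)
    simpa using this
  have hmul := hprod.mul_const (1 / ((d-1).factorial : ℝ))
  rw [one_mul] at hmul
  apply hmul.congr'
  filter_upwards [eventually_ge_atTop 1] with n hn
  have hn0 : (n:ℝ) ≠ 0 := by
    have : (1:ℕ) ≤ n := hn
    positivity
  rw [key n, prod_div_distrib, prod_const, card_range, div_div]
  rw [div_mul_div_comm, mul_one, mul_comm ((n:ℝ)^(d-1)) _]


lemma coe_map' {R S : Type*} [CommSemiring R] [CommSemiring S] (φ : R →+* S) (p : R[X]) :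
    ((p.map φ : S[X]) : PowerSeries S) = PowerSeries.map φ (p : PowerSeries R) := by
  ext n
  simp [Polynomial.coeff_coe, PowerSeries.coeff_map, Polynomial.coeff_map]

lemma one_sub_pow_mul_inv (S : Type*) [CommRing S] (μ : ℕ) :
    ((1 - PowerSeries.X : PowerSeries S)) ^ μ * (PowerSeries.invOneSubPow S μ).val = 1 := by
  have h := (PowerSeries.invOneSubPow S μ).inv_val
  rwa [PowerSeries.invOneSubPow_inv_eq_one_sub_pow] at h

lemma core0 (d : ℕ) (Q : Polynomial ℂ) (hdeg : Q.natDegree = 0) (hQ0 : Q.coeff 0 ≠ 0)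
    (P : Polynomial ℂ) (U : PowerSeries ℂ) (hPU : (P : PowerSeries ℂ) = (Q : PowerSeries ℂ) * U) :
    Tendsto (fun n : ℕ => ‖PowerSeries.coeff n U‖ / (n : ℝ) ^ (d - 1)) atTop (nhds 0) := by
  have hq : Q = Polynomial.C (Q.coeff 0) := Polynomial.eq_C_of_natDegree_eq_zero hdeg
  have hU : U = PowerSeries.C (Q.coeff 0)⁻¹ * (P : PowerSeries ℂ) := by
    have h' := hPU
    rw [hq] at h'
    rw [h', Polynomial.coe_C, ← mul_assoc, ← map_mul, inv_mul_cancel₀ hQ0, map_one, one_mul]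
  have hev : ∀ᶠ n in atTop, (0:ℝ) = ‖PowerSeries.coeff n U‖ / (n : ℝ) ^ (d - 1) := by
    filter_upwards [eventually_gt_atTop P.natDegree] with n hn
    rw [hU, PowerSeries.coeff_C_mul, Polynomial.coeff_coe,
      Polynomial.coeff_eq_zero_of_natDegree_lt hn, mul_zero, norm_zero, zero_div]
  exact Tendsto.congr' hev tendsto_const_nhds

lemma core (d : ℕ) : ∀ (N : ℕ) (Q : Polynomial ℂ), Q.natDegree ≤ N → Q.coeff 0 ≠ 0 →
    (∀ z : ℂ, Q.IsRoot z → 1 ≤ ‖z‖ ∧ Q.rootMultiplicity z < d) →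
    ∀ (P : Polynomial ℂ) (U : PowerSeries ℂ), (P : PowerSeries ℂ) = (Q : PowerSeries ℂ) * U →
    Tendsto (fun n : ℕ => ‖PowerSeries.coeff n U‖ / (n : ℝ) ^ (d - 1)) atTop (nhds 0) := by
  intro N
  induction N with
  | zero =>
    intro Q hQN hQ0 hroots P U hPU
    exact core0 d Q (by omega) hQ0 P U hPU
  | succ N IH =>
    intro Q hQN hQ0 hroots P U hPU
    by_cases hdeg : Q.natDegree = 0
    · exact core0 d Q hdeg hQ0 P U hPU
    have hQne : Q ≠ 0 := fun h => hQ0 (by simp [h])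
    have hdeg' : Q.degree ≠ 0 := by
      rw [Polynomial.degree_eq_natDegree hQne]
      exact_mod_cast hdeg
    obtain ⟨z, hz⟩ := IsAlgClosed.exists_root Q hdeg'
    obtain ⟨hz1, hzd⟩ := hroots z hz
    have hz0 : z ≠ 0 := by
      intro h; rw [h, norm_zero] at hz1; linarith
    set μ := Q.rootMultiplicity z with hμ
    have hμ1 : 1 ≤ μ := (Polynomial.rootMultiplicity_pos hQne).2 hz
    have hd2 : 2 ≤ d := by omega
    set Q₁ := Q /ₘ (Polynomial.X - Polynomial.C z) ^ μ with hQ₁def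
    have key : (Polynomial.X - Polynomial.C z) ^ μ * Q₁ = Q :=
      Q.pow_mul_divByMonic_rootMultiplicity_eq z
    have hQ₁z : Q₁.eval z ≠ 0 :=
      Polynomial.eval_divByMonic_pow_rootMultiplicity_ne_zero z hQne
    set Q₂ := (Polynomial.X - Polynomial.C z) ^ (μ - 1) * Q₁ with hQ₂def
    have hQfact : Q = (Polynomial.X - Polynomial.C z) * Q₂ := by
      have hμ' : μ - 1 + 1 = μ := by omega
      rw [hQ₂def, ← mul_assoc, ← pow_succ', hμ', key]
    have hQ₂ne : Q₂ ≠ 0 := by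
      intro h; rw [h, mul_zero] at hQfact; exact hQne hQfact
    have hXz : (Polynomial.X - Polynomial.C z : Polynomial ℂ) ≠ 0 := Polynomial.X_sub_C_ne_zero z
    have hQ₂deg : Q₂.natDegree ≤ N := by
      have h2 : Q.natDegree = 1 + Q₂.natDegree := by
        rw [hQfact, Polynomial.natDegree_mul hXz hQ₂ne, Polynomial.natDegree_X_sub_C]
      omega
    have hQ₂0 : Q₂.coeff 0 ≠ 0 := by
      intro h
      apply hQ0
      rw [Polynomial.coeff_zero_eq_eval_zero] at h ⊢
      rw [hQfact, Polynomial.eval_mul, h, mul_zero]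
    have hroots₂ : ∀ w : ℂ, Q₂.IsRoot w → 1 ≤ ‖w‖ ∧ Q₂.rootMultiplicity w < d := by
      intro w hw
      have hw' : Q₂.eval w = 0 := hw
      have hwQ : Q.IsRoot w := by
        show Q.eval w = 0
        rw [hQfact, Polynomial.eval_mul, hw', mul_zero]
      refine ⟨(hroots w hwQ).1, ?_⟩
      have hm : Q.rootMultiplicity w
          = (Polynomial.X - Polynomial.C z).rootMultiplicity w + Q₂.rootMultiplicity w := by
        conv_lhs => rw [hQfact]
        rw [Polynomial.rootMultiplicity_mul (by rw [← hQfact]; exact hQne)]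
      have := (hroots w hwQ).2
      omega
    -- unit inverse of Q₂
    have hQ₂unit : IsUnit (Q₂ : PowerSeries ℂ) := by
      rw [PowerSeries.isUnit_iff_constantCoeff, Polynomial.constantCoeff_coe]
      exact isUnit_iff_ne_zero.2 hQ₂0
    obtain ⟨v, hv⟩ := hQ₂unit
    -- partial fraction data
    set c := P.eval z / Q₁.eval z with hc
    have hPz : (P - Polynomial.C c * Q₁).IsRoot z := by
      show (P - Polynomial.C c * Q₁).eval z = 0
      rw [Polynomial.eval_sub, Polynomial.eval_mul, Polynomial.eval_C, hc,
        div_mul_cancel₀ _ hQ₁z, sub_self]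
    obtain ⟨P₁, hP₁⟩ := Polynomial.dvd_iff_isRoot.2 hPz
    set U₂ := (P₁ : PowerSeries ℂ) * (↑v⁻¹ : PowerSeries ℂ) with hU₂def
    have hU₂ : (P₁ : PowerSeries ℂ) = (Q₂ : PowerSeries ℂ) * U₂ := by
      rw [hU₂def, ← hv, ← mul_assoc, mul_comm (v : PowerSeries ℂ) _, mul_assoc,
        Units.mul_inv, mul_one]
    have IH₂ := IH Q₂ hQ₂deg hQ₂0 hroots₂ P₁ U₂ hU₂
    -- the explicit inverse of (X - z)^μ
    set E := (PowerSeries.C ((-z)⁻¹)) ^ μ *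
      PowerSeries.rescale z⁻¹ (PowerSeries.invOneSubPow ℂ μ).val with hEdef
    have hfactor : ((Polynomial.X - Polynomial.C z : Polynomial ℂ) : PowerSeries ℂ)
        = PowerSeries.C (-z) * (1 - PowerSeries.C z⁻¹ * PowerSeries.X) := by
      rw [Polynomial.coe_sub, Polynomial.coe_X, Polynomial.coe_C, mul_sub, mul_one,
        ← mul_assoc, ← map_mul]
      have h1 : -z * z⁻¹ = -1 := by field_simp
      rw [h1, map_neg, map_neg, map_one, neg_one_mul, sub_neg_eq_add]
      ring
    have hE : ((Polynomial.X - Polynomial.C z : Polynomial ℂ) : PowerSeries ℂ) ^ μ * E = 1 := by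
      rw [hfactor, mul_pow, hEdef]
      have h1 : (PowerSeries.C (-z)) ^ μ * (PowerSeries.C ((-z)⁻¹)) ^ μ = 1 := by
        rw [← mul_pow, ← map_mul, mul_inv_cancel₀ (neg_ne_zero.2 hz0), map_one, one_pow]
      have h2 : (1 - PowerSeries.C z⁻¹ * PowerSeries.X) ^ μ *
          PowerSeries.rescale z⁻¹ (PowerSeries.invOneSubPow ℂ μ).val = 1 := by
        have h3 := congrArg (PowerSeries.rescale z⁻¹) (one_sub_pow_mul_inv ℂ μ)
        rw [map_mul, map_pow, map_sub, map_one, PowerSeries.rescale_X] at h3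
        exact h3
      calc (PowerSeries.C (-z)) ^ μ * (1 - PowerSeries.C z⁻¹ * PowerSeries.X) ^ μ *
            ((PowerSeries.C ((-z)⁻¹)) ^ μ *
              PowerSeries.rescale z⁻¹ (PowerSeries.invOneSubPow ℂ μ).val)
          = ((PowerSeries.C (-z)) ^ μ * (PowerSeries.C ((-z)⁻¹)) ^ μ) *
            ((1 - PowerSeries.C z⁻¹ * PowerSeries.X) ^ μ *
              PowerSeries.rescale z⁻¹ (PowerSeries.invOneSubPow ℂ μ).val) := by ring
        _ = 1 := by rw [h1, h2, mul_one]
    have hEcoeff : ∀ n : ℕ, ‖PowerSeries.coeff n E‖ ≤ ((n:ℝ) + d) ^ (d - 2) := by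
      intro n
      rw [hEdef, ← map_pow, PowerSeries.coeff_C_mul, PowerSeries.coeff_rescale,
        PowerSeries.invOneSubPow_val_eq_mk_sub_one_add_choose_of_pos ℂ μ (by omega),
        PowerSeries.coeff_mk]
      have hbase1 : (1:ℝ) ≤ (n:ℝ) + d := by
        have : (1:ℝ) ≤ (d:ℝ) := by exact_mod_cast (by omega : 1 ≤ d)
        have : (0:ℝ) ≤ (n:ℝ) := by positivity
        linarith
      have hz1' : ‖(-z)⁻¹ ^ μ‖ ≤ 1 := by
        rw [norm_pow, norm_inv, norm_neg]
        apply pow_le_one₀ (by positivity)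
        rw [inv_le_one_iff₀]; right; exact hz1
      have hz2' : ‖(z⁻¹) ^ n‖ ≤ 1 := by
        rw [norm_pow, norm_inv]
        apply pow_le_one₀ (by positivity)
        rw [inv_le_one_iff₀]; right; exact hz1
      have hch : ‖((Nat.choose (μ - 1 + n) (μ - 1) : ℂ))‖ ≤ ((n:ℝ) + d) ^ (d - 2) := by
        rw [Complex.norm_natCast]
        calc ((Nat.choose (μ - 1 + n) (μ - 1) : ℝ))
            ≤ ((μ - 1 + n : ℕ) : ℝ) ^ (μ - 1) := by
              exact_mod_cast Nat.choose_le_pow (μ - 1 + n) (μ - 1)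
          _ ≤ ((n:ℝ) + d) ^ (μ - 1) := by
              apply pow_le_pow_left₀ (by positivity)
              push_cast
              have : ((μ:ℝ) - 1 : ℝ) ≤ (d:ℝ) := by
                have : (μ:ℝ) ≤ (d:ℝ) := by exact_mod_cast hzd.le
                linarith
              have hcast : ((μ - 1 : ℕ) : ℝ) ≤ (d:ℝ) := by
                have : ((μ - 1 : ℕ) : ℝ) ≤ (μ:ℝ) := by exact_mod_cast Nat.sub_le μ 1
                have hμd : (μ:ℝ) ≤ (d:ℝ) := by exact_mod_cast hzd.le
                linarith
              linarith
          _ ≤ ((n:ℝ) + d) ^ (d - 2) := by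
              apply pow_le_pow_right₀ hbase1
              omega
      calc ‖(-z)⁻¹ ^ μ * ((z⁻¹) ^ n * ((Nat.choose (μ - 1 + n) (μ - 1) : ℂ)))‖
          = ‖(-z)⁻¹ ^ μ‖ * (‖(z⁻¹) ^ n‖ * ‖((Nat.choose (μ - 1 + n) (μ - 1) : ℂ))‖) := by
            rw [norm_mul, norm_mul]
        _ ≤ 1 * (1 * (((n:ℝ) + d) ^ (d - 2))) := by
            apply mul_le_mul hz1' _ (by positivity) zero_le_one
            apply mul_le_mul hz2' hch (norm_nonneg _) zero_le_one
        _ = ((n:ℝ) + d) ^ (d - 2) := by ring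
    -- the decomposition U = C c * E + U₂
    have hQne' : (Q : PowerSeries ℂ) ≠ 0 := by
      rw [Ne, Polynomial.coe_eq_zero_iff]; exact hQne
    have hQcoe : (Q : PowerSeries ℂ)
        = ((Polynomial.X - Polynomial.C z : Polynomial ℂ) : PowerSeries ℂ) ^ μ *
          (Q₁ : PowerSeries ℂ) := by
      rw [← key, Polynomial.coe_mul, Polynomial.coe_pow]
    have hQcoe₂ : (Q : PowerSeries ℂ)
        = ((Polynomial.X - Polynomial.C z : Polynomial ℂ) : PowerSeries ℂ) *
          (Q₂ : PowerSeries ℂ) := by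
      conv_lhs => rw [hQfact]
      rw [Polynomial.coe_mul]
    have hUeq : U = PowerSeries.C c * E + U₂ := by
      apply mul_left_cancel₀ hQne'
      rw [← hPU, mul_add]
      have t1 : (Q : PowerSeries ℂ) * (PowerSeries.C c * E)
          = PowerSeries.C c * (Q₁ : PowerSeries ℂ) := by
        rw [hQcoe]
        calc ((Polynomial.X - Polynomial.C z : Polynomial ℂ) : PowerSeries ℂ) ^ μ *
              (Q₁ : PowerSeries ℂ) * (PowerSeries.C c * E)
            = PowerSeries.C c * (Q₁ : PowerSeries ℂ) *
              (((Polynomial.X - Polynomial.C z : Polynomial ℂ) : PowerSeries ℂ) ^ μ * E) := by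
              ring
          _ = PowerSeries.C c * (Q₁ : PowerSeries ℂ) := by rw [hE, mul_one]
      have t2 : (Q : PowerSeries ℂ) * U₂
          = (P : PowerSeries ℂ) - PowerSeries.C c * (Q₁ : PowerSeries ℂ) := by
        rw [hQcoe₂, mul_assoc, ← hU₂, ← Polynomial.coe_mul, ← hP₁, Polynomial.coe_sub,
          Polynomial.coe_mul, Polynomial.coe_C]
      rw [t1, t2]
      ring
    -- combine
    have hE0 : Tendsto (fun n : ℕ => ‖PowerSeries.coeff n E‖ / (n:ℝ) ^ (d - 1)) atTop
        (nhds 0) := by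
      apply squeeze_zero' (g := fun n : ℕ => ((n:ℝ) + d) ^ (d - 2) / (n:ℝ) ^ (d - 1))
      · filter_upwards [eventually_ge_atTop 1] with n hn
        have : (1:ℕ) ≤ n := hn
        positivity
      · filter_upwards [eventually_ge_atTop 1] with n hn
        have hn' : (1:ℕ) ≤ n := hn
        have hp : (0:ℝ) < (n:ℝ) ^ (d - 1) := by positivity
        exact (div_le_div_iff_of_pos_right hp).2 (hEcoeff n)
      · exact aux_tend0 (d - 2) (d - 1) (by omega) d (by positivity)
    have hsum : Tendsto (fun n : ℕ => ‖c‖ * (‖PowerSeries.coeff n E‖ / (n:ℝ) ^ (d - 1))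
        + ‖PowerSeries.coeff n U₂‖ / (n:ℝ) ^ (d - 1)) atTop (nhds 0) := by
      have := (hE0.const_mul ‖c‖).add IH₂
      simpa using this
    apply squeeze_zero' _ _ hsum
    · filter_upwards [eventually_ge_atTop 1] with n hn
      have : (1:ℕ) ≤ n := hn
      positivity
    · filter_upwards [eventually_ge_atTop 1] with n hn
      have hn' : (1:ℕ) ≤ n := hn
      have hp : (0:ℝ) < (n:ℝ) ^ (d - 1) := by positivity
      have hco : PowerSeries.coeff n U
          = c * PowerSeries.coeff n E + PowerSeries.coeff n U₂ := by
        rw [hUeq, map_add, PowerSeries.coeff_C_mul]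
      rw [hco]
      calc ‖c * PowerSeries.coeff n E + PowerSeries.coeff n U₂‖ / (n:ℝ) ^ (d - 1)
          ≤ (‖c‖ * ‖PowerSeries.coeff n E‖ + ‖PowerSeries.coeff n U₂‖) / (n:ℝ) ^ (d - 1) := by
            apply (div_le_div_iff_of_pos_right hp).2
            calc ‖c * PowerSeries.coeff n E + PowerSeries.coeff n U₂‖
                ≤ ‖c * PowerSeries.coeff n E‖ + ‖PowerSeries.coeff n U₂‖ := norm_add_le _ _
              _ = ‖c‖ * ‖PowerSeries.coeff n E‖ + ‖PowerSeries.coeff n U₂‖ := by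
                  rw [norm_mul]
        _ = ‖c‖ * (‖PowerSeries.coeff n E‖ / (n:ℝ) ^ (d - 1))
            + ‖PowerSeries.coeff n U₂‖ / (n:ℝ) ^ (d - 1) := by
            rw [add_div, mul_div_assoc]

/-- If `f(x)/((1-x)^d g(x)) = ∑ a_n x^n`, with `f(1), g(1) ≠ 0` and all complex roots of `g`
on the unit circle with multiplicity `< d`, then `a_n / n^{d-1} → f(1)/((d-1)! g(1))`. -/
theorem stmt_11 (f g : Polynomial ℝ) (d : ℕ) (hd : 1 ≤ d)
    (hf1 : f.eval 1 ≠ 0) (hg1 : g.eval 1 ≠ 0)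
    (hroots : ∀ z : ℂ, (g.map (algebraMap ℝ ℂ)).IsRoot z →
      ‖z‖ = 1 ∧ (g.map (algebraMap ℝ ℂ)).rootMultiplicity z < d)
    (a : ℕ → ℝ)
    (ha : (f : PowerSeries ℝ) =
      (1 - PowerSeries.X) ^ d * (g : PowerSeries ℝ) * PowerSeries.mk a) :
    Tendsto (fun n : ℕ => a n / (n : ℝ) ^ (d - 1)) atTop
      (nhds (f.eval 1 / ((d - 1).factorial * g.eval 1))) := by
  have hg0 : g.eval 0 ≠ 0 := by
    intro h0
    have hroot : (g.map (algebraMap ℝ ℂ)).IsRoot 0 := by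
      show (g.map (algebraMap ℝ ℂ)).eval 0 = 0
      rw [Polynomial.eval_map, Polynomial.eval₂_at_zero, Polynomial.coeff_zero_eq_eval_zero,
        h0, map_zero]
    have := (hroots 0 hroot).1
    simp at this
  have hgne : g ≠ 0 := fun h0 => hg1 (by simp [h0])
  set c := f.eval 1 / g.eval 1 with hcdef
  have hfc : (f - Polynomial.C c * g).IsRoot 1 := by
    show (f - Polynomial.C c * g).eval 1 = 0
    rw [Polynomial.eval_sub, Polynomial.eval_mul, Polynomial.eval_C, hcdef,
      div_mul_cancel₀ _ hg1, sub_self]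
  obtain ⟨h, hh⟩ := Polynomial.dvd_iff_isRoot.2 hfc
  set Q : Polynomial ℝ := (1 - Polynomial.X) ^ (d - 1) * g with hQdef
  have hQ0 : Q.coeff 0 ≠ 0 := by
    rw [Polynomial.coeff_zero_eq_eval_zero, hQdef, Polynomial.eval_mul, Polynomial.eval_pow,
      Polynomial.eval_sub, Polynomial.eval_one, Polynomial.eval_X, sub_zero, one_pow, one_mul]
    exact hg0
  have hQne : Q ≠ 0 := fun hq => hQ0 (by simp [hq])
  have hQunit : IsUnit (Q : PowerSeries ℝ) := by
    rw [PowerSeries.isUnit_iff_constantCoeff, Polynomial.constantCoeff_coe]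
    exact isUnit_iff_ne_zero.2 hQ0
  obtain ⟨v, hv⟩ := hQunit
  set U := ((-h : Polynomial ℝ) : PowerSeries ℝ) * (↑v⁻¹ : PowerSeries ℝ) with hUdef
  have hU : ((-h : Polynomial ℝ) : PowerSeries ℝ) = (Q : PowerSeries ℝ) * U := by
    rw [hUdef, ← hv, ← mul_assoc, mul_comm (v : PowerSeries ℝ) _, mul_assoc,
      Units.mul_inv, mul_one]
  set S := (PowerSeries.invOneSubPow ℝ d).val with hSdef
  have hSinv : (1 - PowerSeries.X : PowerSeries ℝ) ^ d * S = 1 := one_sub_pow_mul_inv ℝ d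
  have honeX : ((1 - Polynomial.X : Polynomial ℝ) : PowerSeries ℝ) = 1 - PowerSeries.X := by
    rw [Polynomial.coe_sub, Polynomial.coe_one, Polynomial.coe_X]
  have hQcoe : (Q : PowerSeries ℝ)
      = (1 - PowerSeries.X) ^ (d - 1) * (g : PowerSeries ℝ) := by
    rw [hQdef, Polynomial.coe_mul, Polynomial.coe_pow, honeX]
  have honeXne : (1 - PowerSeries.X : PowerSeries ℝ) ≠ 0 := by
    intro h0
    have := congrArg (PowerSeries.constantCoeff) h0
    simp at this
  have hgcoene : (g : PowerSeries ℝ) ≠ 0 := by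
    rw [Ne, Polynomial.coe_eq_zero_iff]; exact hgne
  have hmka : PowerSeries.mk a = PowerSeries.C c * S + U := by
    apply mul_left_cancel₀
      (show (1 - PowerSeries.X : PowerSeries ℝ) ^ d * (g : PowerSeries ℝ) ≠ 0 from
        mul_ne_zero (pow_ne_zero _ honeXne) hgcoene)
    rw [← ha, mul_add]
    have t1 : (1 - PowerSeries.X : PowerSeries ℝ) ^ d * (g : PowerSeries ℝ) *
        (PowerSeries.C c * S) = PowerSeries.C c * (g : PowerSeries ℝ) := by
      calc (1 - PowerSeries.X : PowerSeries ℝ) ^ d * (g : PowerSeries ℝ) *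
            (PowerSeries.C c * S)
          = PowerSeries.C c * (g : PowerSeries ℝ) *
            ((1 - PowerSeries.X : PowerSeries ℝ) ^ d * S) := by ring
        _ = PowerSeries.C c * (g : PowerSeries ℝ) := by rw [hSinv, mul_one]
    have hd1 : d - 1 + 1 = d := by omega
    have t2 : (1 - PowerSeries.X : PowerSeries ℝ) ^ d * (g : PowerSeries ℝ) * U
        = (f : PowerSeries ℝ) - PowerSeries.C c * (g : PowerSeries ℝ) := by
      have e1 : (1 - PowerSeries.X : PowerSeries ℝ) ^ d * (g : PowerSeries ℝ) * U
          = (1 - PowerSeries.X) * ((Q : PowerSeries ℝ) * U) := by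
        rw [hQcoe]
        calc (1 - PowerSeries.X : PowerSeries ℝ) ^ d * (g : PowerSeries ℝ) * U
            = (1 - PowerSeries.X) * ((1 - PowerSeries.X) ^ (d-1) * (g : PowerSeries ℝ) * U) := by
              conv_lhs => rw [← hd1]
              ring
          _ = (1 - PowerSeries.X) *
              ((1 - PowerSeries.X) ^ (d-1) * (g : PowerSeries ℝ) * U) := rfl
      rw [e1, ← hU, ← honeX, ← Polynomial.coe_mul]
      have e2 : (1 - Polynomial.X : Polynomial ℝ) * (-h) = f - Polynomial.C c * g := by
        rw [hh]
        have : (Polynomial.C (1:ℝ)) = (1 : Polynomial ℝ) := map_one _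
        rw [this]
        ring
      rw [e2, Polynomial.coe_sub, Polynomial.coe_mul, Polynomial.coe_C]
    rw [t1, t2]
    ring
  have han : ∀ n : ℕ, a n = c * ((d - 1 + n).choose (d - 1) : ℝ) + PowerSeries.coeff n U := by
    intro n
    have hcoeff := congrArg (PowerSeries.coeff n) hmka
    rwa [PowerSeries.coeff_mk, map_add, PowerSeries.coeff_C_mul, hSdef,
      PowerSeries.invOneSubPow_val_eq_mk_sub_one_add_choose_of_pos ℝ d (by omega),
      PowerSeries.coeff_mk] at hcoeff
  -- pass to ℂ
  set gc := g.map (algebraMap ℝ ℂ) with hgcdef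
  set Qc := Q.map (algebraMap ℝ ℂ) with hQcdef
  have hUc : (((-h).map (algebraMap ℝ ℂ) : Polynomial ℂ) : PowerSeries ℂ)
      = (Qc : PowerSeries ℂ) * PowerSeries.map (algebraMap ℝ ℂ) U := by
    rw [coe_map', hQcdef, coe_map', ← map_mul, ← hU]
  have hQc0 : Qc.coeff 0 ≠ 0 := by
    rw [hQcdef, Polynomial.coeff_map]
    simpa using hQ0
  have hQcne : Qc ≠ 0 := fun hq => hQc0 (by simp [hq])
  have hQcfact : Qc = (1 - Polynomial.X) ^ (d - 1) * gc := by
    rw [hQcdef, hQdef, Polynomial.map_mul, Polynomial.map_pow, Polynomial.map_sub,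
      Polynomial.map_one, Polynomial.map_X, hgcdef]
  have hgc1 : gc.eval 1 ≠ 0 := by
    rw [hgcdef, Polynomial.eval_one_map]
    simpa using hg1
  have hgcne : gc ≠ 0 := fun hq => hgc1 (by simp [hq])
  have honeXcne : ((1 - Polynomial.X : Polynomial ℂ)) ^ (d - 1) ≠ 0 := by
    apply pow_ne_zero
    intro h0
    have := congrArg (fun p => Polynomial.eval 0 p) h0
    simp at this
  have hrootsc : ∀ w : ℂ, Qc.IsRoot w → 1 ≤ ‖w‖ ∧ Qc.rootMultiplicity w < d := by
    intro w hw
    have hev : (1 - w) ^ (d - 1) * gc.eval w = 0 := by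
      have hw' : Qc.eval w = 0 := hw
      rw [hQcfact, Polynomial.eval_mul, Polynomial.eval_pow, Polynomial.eval_sub,
        Polynomial.eval_one, Polynomial.eval_X] at hw'
      exact hw'
    have hQcmul : Qc.rootMultiplicity w
        = ((1 - Polynomial.X : Polynomial ℂ) ^ (d-1)).rootMultiplicity w
          + gc.rootMultiplicity w := by
      conv_lhs => rw [hQcfact]
      rw [Polynomial.rootMultiplicity_mul (by rw [← hQcfact]; exact hQcne)]
    have honeXfact : (1 - Polynomial.X : Polynomial ℂ)
        = Polynomial.C (-1) * (Polynomial.X - Polynomial.C 1) := by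
      rw [map_neg, map_one]
      ring
    rcases mul_eq_zero.1 hev with h1 | h2
    · have hw1 : w = 1 := by
        by_cases hd1 : d = 1
        · rw [hd1] at h1; simp at h1
        · have := pow_eq_zero_iff (n := d - 1) (by omega) |>.1 h1
          exact (sub_eq_zero.1 this).symm
      subst hw1
      refine ⟨by simp, ?_⟩
      have hgc1' : gc.rootMultiplicity 1 = 0 :=
        Polynomial.rootMultiplicity_eq_zero hgc1
      have honepow : ((1 - Polynomial.X : Polynomial ℂ) ^ (d - 1)).rootMultiplicity 1
          = d - 1 := by
        rw [honeXfact, mul_pow, ← map_pow,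
          Polynomial.rootMultiplicity_mul (mul_ne_zero
            (Polynomial.C_ne_zero.2 (pow_ne_zero _ (neg_ne_zero.2 one_ne_zero)))
            (pow_ne_zero _ (Polynomial.X_sub_C_ne_zero 1))),
          Polynomial.rootMultiplicity_C, Polynomial.rootMultiplicity_X_sub_C_pow, zero_add]
      rw [hQcmul, honepow, hgc1']
      omega
    · have hgr : gc.IsRoot w := h2
      obtain ⟨habs, hmult⟩ := hroots w hgr
      have hwnorm : 1 ≤ ‖w‖ := by rw [habs]
      refine ⟨hwnorm, ?_⟩
      have hw1 : w ≠ 1 := by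
        intro hww; rw [hww] at hgr; exact hgc1 hgr
      have h0 : ((1 - Polynomial.X : Polynomial ℂ) ^ (d - 1)).rootMultiplicity w = 0 := by
        apply Polynomial.rootMultiplicity_eq_zero
        intro hr
        have hr' : (1 - w) ^ (d - 1) = 0 := by
          have : ((1 - Polynomial.X : Polynomial ℂ) ^ (d - 1)).eval w = 0 := hr
          rw [Polynomial.eval_pow, Polynomial.eval_sub, Polynomial.eval_one,
            Polynomial.eval_X] at this
          exact this
        by_cases hd1 : d = 1
        · rw [hd1] at hr'; simp at hr'
        · have := pow_eq_zero_iff (n := d - 1) (by omega) |>.1 hr'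
          exact hw1 (sub_eq_zero.1 this).symm
      rw [hQcmul, h0, zero_add]
      exact hmult
  have hcore := core d Qc.natDegree Qc le_rfl hQc0 hrootsc ((-h).map (algebraMap ℝ ℂ))
    (PowerSeries.map (algebraMap ℝ ℂ) U) hUc
  have hU0 : Tendsto (fun n : ℕ => PowerSeries.coeff n U / (n:ℝ) ^ (d - 1)) atTop
      (nhds 0) := by
    rw [tendsto_zero_iff_abs_tendsto_zero]
    refine Tendsto.congr (fun n => ?_) hcore
    have hcast : ‖(algebraMap ℝ ℂ) (PowerSeries.coeff n U)‖
        = |PowerSeries.coeff n U| := by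
      simp [Real.norm_eq_abs]
    simp [PowerSeries.coeff_map, abs_div, hcast,
      abs_of_nonneg (by positivity : (0:ℝ) ≤ (n:ℝ) ^ (d - 1))]
  have hlim := ((limA d hd).const_mul c).add hU0
  rw [add_zero] at hlim
  have hfact : ((d - 1).factorial : ℝ) ≠ 0 := Nat.cast_ne_zero.2 (Nat.factorial_ne_zero _)
  have hval : c * (1 / ((d - 1).factorial : ℝ)) = f.eval 1 / ((d - 1).factorial * g.eval 1) := by
    rw [hcdef, div_mul_div_comm, mul_one, mul_comm (Polynomial.eval 1 g) (((d - 1).factorial : ℝ))]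
  rw [hval] at hlim
  apply hlim.congr
  intro n
  rw [han n, add_div, mul_div_assoc]
end

section
/- If a power series F(t) = ∑ a_n t^n is a rational function f(t)/((1-t)^d g(t)) with f(1), g(1) ≠ 0 and all roots of g on the unit circle of multiplicity < d, then the partial sums s_n = ∑_{m=0}^n a_m satisfy s_n / n^d → f(1)/(d! · g(1)) as n → ∞. -/
open Polynomial Filter Finset Topology PowerSeries

lemma aux_choose_mul_factorial (q r : ℕ) :
    (q + r).choose r * r.factorial = ∏ i ∈ Finset.range r, (q + 1 + i) := by
  induction r with
  | zero => simp
  | succ r ih =>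
    rw [Finset.prod_range_succ, ← ih, Nat.factorial_succ]
    have h := Nat.add_one_mul_choose_eq (q + r) r
    have : q + (r+1) = (q+r) + 1 := by omega
    have h' : (q + r + 1).choose (r + 1) * (r + 1) = (q + r + 1) * (q + r).choose r := by
      simpa [Nat.succ_eq_add_one] using h.symm
    rw [this, ← mul_assoc, h']
    ring


lemma aux_tendsto_choose (r k : ℕ) :
    Tendsto (fun n : ℕ => ((n - k + r).choose r : ℝ) / (n : ℝ) ^ r) atTop
      (𝓝 (1 / r.factorial)) := by
  have hprod : Tendsto (fun n : ℕ => ∏ i ∈ Finset.range r, (((n : ℝ) + (1 + i) - k) / n))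
      atTop (𝓝 1) := by
    have h1 : Tendsto (fun n : ℕ => ∏ i ∈ Finset.range r, (((n : ℝ) + (1 + i) - k) / n))
        atTop (𝓝 (∏ _i ∈ Finset.range r, (1 : ℝ))) := by
      refine tendsto_finset_prod _ (fun i _ => ?_)
      have h2 : Tendsto (fun n : ℕ => 1 + ((1 + i : ℝ) - k) / n) atTop (𝓝 (1 + 0)) := by
        exact tendsto_const_nhds.add (tendsto_const_nhds.div_atTop tendsto_natCast_atTop_atTop)
      rw [add_zero] at h2
      apply h2.congr'
      filter_upwards [eventually_ge_atTop 1] with n hn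
      have : (n : ℝ) ≠ 0 := by positivity
      field_simp
      ring
    simpa using h1
  have hmain : Tendsto (fun n : ℕ =>
      (1 / (r.factorial : ℝ)) * ∏ i ∈ Finset.range r, (((n : ℝ) + (1 + i) - k) / n))
      atTop (𝓝 (1 / r.factorial * 1)) := tendsto_const_nhds.mul hprod
  rw [mul_one] at hmain
  apply hmain.congr'
  filter_upwards [eventually_ge_atTop (k + 1)] with n hn
  have hnk : n - k + k = n := by omega
  have hcast : ((n - k + r).choose r : ℝ) * r.factorial
      = ∏ i ∈ Finset.range r, (((n : ℝ) + (1 + i) - k)) := by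
    have := aux_choose_mul_factorial (n - k) r
    have hc : (((n - k + r).choose r * r.factorial : ℕ) : ℝ)
        = ((∏ i ∈ Finset.range r, (n - k + 1 + i) : ℕ) : ℝ) := by rw [this]
    push_cast at hc
    rw [hc]
    apply Finset.prod_congr rfl
    intro i _
    have : ((n - k : ℕ) : ℝ) = (n : ℝ) - k := by
      push_cast [Nat.cast_sub (by omega : k ≤ n)]
      ring
    rw [this]; ring
  have hn0 : (n : ℝ) ≠ 0 := by
    have : 0 < n := by omega
    exact_mod_cast this.ne'
  have hr0 : (r.factorial : ℝ) ≠ 0 := by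
    exact_mod_cast r.factorial_pos.ne'
  rw [Finset.prod_div_distrib, Finset.prod_const, ← hcast]
  field_simp
  rw [Finset.card_range]


lemma aux_tendsto_chooseC (r k : ℕ) :
    Tendsto (fun n : ℕ => ((n - k + r).choose r : ℂ) / (n : ℂ) ^ r) atTop
      (𝓝 (1 / r.factorial)) := by
  have h := (aux_tendsto_choose r k).ofReal
  have h2 : ((1 / r.factorial : ℝ) : ℂ) = 1 / r.factorial := by push_cast; ring
  rw [h2] at h
  apply h.congr
  intro n
  push_cast
  ring


lemma aux_small (m d : ℕ) (hm : 1 ≤ m) (hmd : m < d) (B : ℝ) (u : ℕ → ℂ)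
    (hu : ∀ n, ‖u n‖ ≤ B * ((m - 1 + n).choose (m - 1) : ℝ)) :
    Tendsto (fun n : ℕ => u n / (n : ℂ) ^ (d - 1)) atTop (𝓝 0) := by
  have hb : Tendsto (fun n : ℕ => ((m - 1 + n).choose (m - 1) : ℝ) / (n : ℝ) ^ (d - 1))
      atTop (𝓝 0) := by
    have h0 : Tendsto (fun n : ℕ => 1 / (n : ℝ) ^ (d - m)) atTop (𝓝 0) := by
      have h1 : Tendsto (fun n : ℕ => (n : ℝ) ^ (d - m)) atTop atTop :=
        (tendsto_pow_atTop (show d - m ≠ 0 by omega)).comp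
          (tendsto_natCast_atTop_atTop (R := ℝ))
      exact h1.inv_tendsto_atTop.congr fun n => (one_div _).symm
    have h1 : Tendsto (fun n : ℕ =>
        (((n - 0 + (m - 1)).choose (m - 1) : ℝ) / (n : ℝ) ^ (m - 1)) * (1 / (n : ℝ) ^ (d - m)))
        atTop (𝓝 (1 / (m - 1).factorial * 0)) := (aux_tendsto_choose (m - 1) 0).mul h0
    rw [mul_zero] at h1
    apply h1.congr
    intro n
    have hidx : n - 0 + (m - 1) = m - 1 + n := by omega
    have hpow : (n : ℝ) ^ (m - 1) * (n : ℝ) ^ (d - m) = (n : ℝ) ^ (d - 1) := by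
      rw [← pow_add]; congr 1; omega
    rw [hidx, div_mul_div_comm, mul_one, hpow]
  have hb2 : Tendsto (fun n : ℕ =>
      B * (((m - 1 + n).choose (m - 1) : ℝ) / (n : ℝ) ^ (d - 1))) atTop (𝓝 (B * 0)) :=
    tendsto_const_nhds.mul hb
  rw [mul_zero] at hb2
  rw [tendsto_zero_iff_norm_tendsto_zero]
  apply squeeze_zero (fun n => norm_nonneg _) ?_ hb2
  intro n
  rcases Nat.eq_zero_or_pos n with rfl | h
  · simp [zero_pow (show d - 1 ≠ 0 by omega)]
  · rw [norm_div, norm_pow]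
    simp only [Complex.norm_natCast]
    rw [← mul_div_assoc]
    gcongr
    exact hu n


lemma aux_inv_series (ζ : ℂ) (hζ : ζ ≠ 0) (m : ℕ) :
    ((Polynomial.X - Polynomial.C ζ : ℂ[X]) : ℂ⟦X⟧) ^ m *
      (PowerSeries.C ((-ζ)⁻¹ ^ m) * PowerSeries.rescale ζ⁻¹ (invOneSubPow ℂ m).val) = 1 := by
  have hXC : ((Polynomial.X - Polynomial.C ζ : ℂ[X]) : ℂ⟦X⟧)
      = PowerSeries.C (-ζ) * PowerSeries.rescale ζ⁻¹ (1 - PowerSeries.X) := by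
    rw [map_sub, map_one, PowerSeries.rescale_X, Polynomial.coe_sub, Polynomial.coe_X,
      Polynomial.coe_C, mul_sub, mul_one, ← mul_assoc, ← map_mul]
    rw [show -ζ * ζ⁻¹ = -1 by field_simp]
    simp only [map_neg, map_one]
    ring
  have h1 : ((1 : ℂ⟦X⟧) - PowerSeries.X) ^ m * (invOneSubPow ℂ m).val = 1 := by
    rw [← invOneSubPow_inv_eq_one_sub_pow]; exact (invOneSubPow ℂ m).inv_val
  have h2 : (PowerSeries.C ((-ζ) ^ m * (-ζ)⁻¹ ^ m)) *
      (PowerSeries.rescale ζ⁻¹ (((1 : ℂ⟦X⟧) - PowerSeries.X) ^ m * (invOneSubPow ℂ m).val))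
      = 1 := by
    rw [h1, map_one, mul_one, ← mul_pow, mul_inv_cancel₀ (by simpa using hζ), one_pow, map_one]
  calc ((Polynomial.X - Polynomial.C ζ : ℂ[X]) : ℂ⟦X⟧) ^ m *
      (PowerSeries.C ((-ζ)⁻¹ ^ m) * PowerSeries.rescale ζ⁻¹ (invOneSubPow ℂ m).val)
      = (PowerSeries.C ((-ζ) ^ m * (-ζ)⁻¹ ^ m)) *
        (PowerSeries.rescale ζ⁻¹ (((1 : ℂ⟦X⟧) - PowerSeries.X) ^ m * (invOneSubPow ℂ m).val)) := by
        rw [hXC, mul_pow, map_mul, map_mul, map_pow, map_pow, map_pow]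
        ring_nf
    _ = 1 := h2


lemma key0 (g f : ℂ[X]) (d : ℕ) (hd : 1 ≤ d) (hg1 : g.eval 1 ≠ 0) (hdeg : g.natDegree = 0)
    (a : ℕ → ℂ)
    (ha : (f : ℂ⟦X⟧) = (1 - PowerSeries.X) ^ d * (g : ℂ⟦X⟧) * PowerSeries.mk a) :
    Tendsto (fun n : ℕ => a n / (n : ℂ) ^ (d - 1)) atTop
      (𝓝 (f.eval 1 / ((d - 1).factorial * g.eval 1))) := by
  obtain ⟨c, hgc⟩ := Polynomial.natDegree_eq_zero.mp hdeg
  have hc : c ≠ 0 := by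
    intro h; apply hg1; rw [← hgc, h]; simp
  have hgeval : g.eval 1 = c := by rw [← hgc]; simp
  have h1 : ((1 : ℂ⟦X⟧) - PowerSeries.X) ^ d * (invOneSubPow ℂ d).val = 1 := by
    rw [← invOneSubPow_inv_eq_one_sub_pow]; exact (invOneSubPow ℂ d).inv_val
  have hg' : (g : ℂ⟦X⟧) = PowerSeries.C c := by rw [← hgc, Polynomial.coe_C]
  have hmk : PowerSeries.mk a
      = (PowerSeries.C c⁻¹ * (f : ℂ⟦X⟧)) * (invOneSubPow ℂ d).val := by
    rw [ha, hg']
    symm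
    calc PowerSeries.C c⁻¹ * ((1 - PowerSeries.X) ^ d * PowerSeries.C c *
            PowerSeries.mk a) * (invOneSubPow ℂ d).val
        = (PowerSeries.C c⁻¹ * PowerSeries.C c) *
            (((1 - PowerSeries.X) ^ d * (invOneSubPow ℂ d).val) * PowerSeries.mk a) := by ring
      _ = PowerSeries.mk a := by
          rw [← map_mul, inv_mul_cancel₀ hc, h1, map_one, one_mul, one_mul]
  have hcoeff : ∀ n, a n = ∑ k ∈ Finset.range (n + 1),
      (c⁻¹ * f.coeff k) * ((d - 1 + (n - k)).choose (d - 1) : ℂ) := by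
    intro n
    have h2 := congrArg (PowerSeries.coeff n) hmk
    rw [PowerSeries.coeff_mk, PowerSeries.coeff_mul,
      invOneSubPow_val_eq_mk_sub_one_add_choose_of_pos (S := ℂ) (d := d) (by omega)] at h2
    rw [h2, Finset.Nat.sum_antidiagonal_eq_sum_range_succ_mk]
    apply Finset.sum_congr rfl
    intro k _
    rw [PowerSeries.coeff_C_mul, PowerSeries.coeff_mk, Polynomial.coeff_coe]
  set D := f.natDegree with hD
  have hev : f.eval 1 = ∑ k ∈ Finset.range (D + 1), f.coeff k := by
    rw [eval_eq_sum_range]; simp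
    rfl
  have hlim : Tendsto (fun n : ℕ => ∑ k ∈ Finset.range (D + 1),
      (c⁻¹ * f.coeff k) * (((n - k + (d - 1)).choose (d - 1) : ℂ) / (n : ℂ) ^ (d - 1)))
      atTop (𝓝 (∑ k ∈ Finset.range (D + 1), (c⁻¹ * f.coeff k) * (1 / (d - 1).factorial))) :=
    tendsto_finset_sum _ (fun k _ => tendsto_const_nhds.mul (aux_tendsto_chooseC (d - 1) k))
  have hval : (∑ k ∈ Finset.range (D + 1), (c⁻¹ * f.coeff k) * (1 / (d - 1).factorial))
      = f.eval 1 / ((d - 1).factorial * g.eval 1) := by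
    have hfac : ((d - 1).factorial : ℂ) ≠ 0 := by exact_mod_cast (d - 1).factorial_pos.ne'
    rw [hev, hgeval, ← Finset.sum_mul, ← Finset.mul_sum,
      eq_div_iff (mul_ne_zero hfac hc)]
    field_simp
  rw [← hval]
  apply hlim.congr'
  filter_upwards [eventually_ge_atTop D] with n hn
  rw [hcoeff n]
  have hsub : Finset.range (D + 1) ⊆ Finset.range (n + 1) := by
    apply Finset.range_subset_range.mpr; omega
  rw [← Finset.sum_subset hsub (fun k _ hk => by
    rw [Polynomial.coeff_eq_zero_of_natDegree_lt (by
      simp only [Finset.mem_range] at hk ⊢; omega), mul_zero, zero_mul])]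
  rw [Finset.sum_div]
  apply Finset.sum_congr rfl
  intro k hk
  rw [mul_div_assoc]
  have : d - 1 + (n - k) = n - k + (d - 1) := by omega
  rw [this]


lemma key : ∀ (N : ℕ) (g : ℂ[X]), g.natDegree ≤ N → ∀ (f : ℂ[X]) (d : ℕ), 1 ≤ d →
    g.eval 1 ≠ 0 →
    (∀ z : ℂ, g.IsRoot z → 1 ≤ ‖z‖ ∧ g.rootMultiplicity z < d) →
    ∀ a : ℕ → ℂ, (f : ℂ⟦X⟧) = (1 - PowerSeries.X) ^ d * (g : ℂ⟦X⟧) * PowerSeries.mk a →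
    Tendsto (fun n : ℕ => a n / (n : ℂ) ^ (d - 1)) atTop
      (𝓝 (f.eval 1 / ((d - 1).factorial * g.eval 1))) := by
  intro N
  induction N with
  | zero => exact fun g hg f d hd hg1 _ a ha => key0 g f d hd hg1 (Nat.le_zero.mp hg) a ha
  | succ N ih =>
    intro g hgdeg f d hd hg1 hroots a ha
    by_cases hdeg0 : g.natDegree = 0
    · exact key0 g f d hd hg1 hdeg0 a ha
    have hg0 : g ≠ 0 := fun h => hg1 (by simp [h])
    have hdegpos : 0 < g.degree := natDegree_pos_iff_degree_pos.mp (by omega)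
    obtain ⟨ζ, hζroot⟩ := Complex.exists_root hdegpos
    obtain ⟨hζabs, hζmult⟩ := hroots ζ hζroot
    have hζ0 : ζ ≠ 0 := by
      intro h; rw [h] at hζabs; simp at hζabs; linarith
    have hζ1 : ζ ≠ 1 := by intro h; rw [h] at hζroot; exact hg1 hζroot
    have h1ζ : (1 : ℂ) - ζ ≠ 0 := sub_ne_zero.mpr (Ne.symm hζ1)
    set m := g.rootMultiplicity ζ with hm
    have hm1 : 1 ≤ m := (rootMultiplicity_pos hg0).mpr hζroot
    have hd2 : 2 ≤ d := by omega
    set g₂ := g /ₘ (Polynomial.X - Polynomial.C ζ) ^ m with hg₂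
    have hfact : (Polynomial.X - Polynomial.C ζ) ^ m * g₂ = g :=
      pow_mul_divByMonic_rootMultiplicity_eq g ζ
    have hg₂ζ : g₂.eval ζ ≠ 0 := eval_divByMonic_pow_rootMultiplicity_ne_zero ζ hg0
    set g' := (Polynomial.X - Polynomial.C ζ) ^ (m - 1) * g₂ with hg'def
    have hgfact : (Polynomial.X - Polynomial.C ζ) * g' = g := by
      rw [hg'def, ← mul_assoc, ← pow_succ', show m - 1 + 1 = m by omega, hfact]
    have hg'0 : g' ≠ 0 := by
      intro h; rw [h, mul_zero] at hgfact; exact hg0 hgfact.symm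
    have hXζne : (Polynomial.X - Polynomial.C ζ : ℂ[X]) ≠ 0 := X_sub_C_ne_zero ζ
    have hdeg' : g'.natDegree ≤ N := by
      have h2 := Polynomial.natDegree_mul hXζne hg'0
      rw [hgfact, Polynomial.natDegree_X_sub_C] at h2
      omega
    have hUζ : ((1 : ℂ) - ζ) ^ d * g₂.eval ζ ≠ 0 :=
      mul_ne_zero (pow_ne_zero _ h1ζ) hg₂ζ
    set β := f.eval ζ / (((1 : ℂ) - ζ) ^ d * g₂.eval ζ) with hβ
    set U := (1 - Polynomial.X : ℂ[X]) ^ d * g₂ with hU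
    have hUeval : U.eval ζ = ((1 : ℂ) - ζ) ^ d * g₂.eval ζ := by
      rw [hU]; simp
    have hrootβ : (f - Polynomial.C β * U).IsRoot ζ := by
      simp only [IsRoot, eval_sub, eval_mul, eval_C, hUeval, hβ]
      field_simp
      simp
    obtain ⟨f₁, hf₁⟩ := dvd_iff_isRoot.mpr hrootβ
    -- power series inverse of (X - ζ)^m
    set S := PowerSeries.C ((-ζ)⁻¹ ^ m) * PowerSeries.rescale ζ⁻¹ (invOneSubPow ℂ m).val
      with hS
    have hPS : ((Polynomial.X - Polynomial.C ζ : ℂ[X]) : ℂ⟦X⟧) ^ m * S = 1 :=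
      aux_inv_series ζ hζ0 m
    have hScoeff : ∀ n, PowerSeries.coeff n S
        = (-ζ)⁻¹ ^ m * (ζ⁻¹ ^ n * ((m - 1 + n).choose (m - 1) : ℂ)) := by
      intro n
      rw [hS, PowerSeries.coeff_C_mul, PowerSeries.coeff_rescale,
        invOneSubPow_val_eq_mk_sub_one_add_choose_of_pos (S := ℂ) (d := m) (by omega),
        PowerSeries.coeff_mk]
    set a' : ℕ → ℂ := fun n => a n - β * PowerSeries.coeff n S with ha'
    have hmka' : PowerSeries.mk a' = PowerSeries.mk a - PowerSeries.C β * S := by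
      ext n
      simp [ha', PowerSeries.coeff_mk, map_sub, PowerSeries.coeff_C_mul]
    have hXζ0 : ((Polynomial.X - Polynomial.C ζ : ℂ[X]) : ℂ⟦X⟧) ≠ 0 := by
      intro h
      have := congrArg (PowerSeries.coeff 0) h
      rw [Polynomial.coeff_coe] at this
      simp at this
      exact hζ0 this
    have e4 : (U : ℂ⟦X⟧) = (1 - PowerSeries.X) ^ d * (g₂ : ℂ⟦X⟧) := by
      rw [hU, Polynomial.coe_mul, Polynomial.coe_pow, Polynomial.coe_sub,
        Polynomial.coe_one, Polynomial.coe_X]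
    have e2 : ((Polynomial.X - Polynomial.C ζ : ℂ[X]) : ℂ⟦X⟧) * (g' : ℂ⟦X⟧) = (g : ℂ⟦X⟧) := by
      rw [← Polynomial.coe_mul, hgfact]
    have e3 : ((Polynomial.X - Polynomial.C ζ : ℂ[X]) : ℂ⟦X⟧) * (g' : ℂ⟦X⟧) * S
        = (g₂ : ℂ⟦X⟧) := by
      rw [hg'def, Polynomial.coe_mul, Polynomial.coe_pow]
      calc ((Polynomial.X - Polynomial.C ζ : ℂ[X]) : ℂ⟦X⟧) *
            (((Polynomial.X - Polynomial.C ζ : ℂ[X]) : ℂ⟦X⟧) ^ (m - 1) * (g₂ : ℂ⟦X⟧)) * S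
          = (((Polynomial.X - Polynomial.C ζ : ℂ[X]) : ℂ⟦X⟧) ^ (m - 1 + 1) * S) *
            (g₂ : ℂ⟦X⟧) := by ring
        _ = (g₂ : ℂ⟦X⟧) := by
            rw [show m - 1 + 1 = m by omega, hPS, one_mul]
    have hkey : (f₁ : ℂ⟦X⟧) = (1 - PowerSeries.X) ^ d * (g' : ℂ⟦X⟧) * PowerSeries.mk a' := by
      apply mul_left_cancel₀ hXζ0
      have e1 : ((Polynomial.X - Polynomial.C ζ : ℂ[X]) : ℂ⟦X⟧) * (f₁ : ℂ⟦X⟧)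
          = (f : ℂ⟦X⟧) - PowerSeries.C β * (U : ℂ⟦X⟧) := by
        rw [← Polynomial.coe_mul, ← hf₁, Polynomial.coe_sub, Polynomial.coe_mul,
          Polynomial.coe_C]
      rw [e1, hmka']
      symm
      calc ((Polynomial.X - Polynomial.C ζ : ℂ[X]) : ℂ⟦X⟧) *
            ((1 - PowerSeries.X) ^ d * (g' : ℂ⟦X⟧) * (PowerSeries.mk a - PowerSeries.C β * S))
          = (1 - PowerSeries.X) ^ d *
              (((Polynomial.X - Polynomial.C ζ : ℂ[X]) : ℂ⟦X⟧) * (g' : ℂ⟦X⟧)) *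
              PowerSeries.mk a
            - PowerSeries.C β * ((1 - PowerSeries.X) ^ d *
              (((Polynomial.X - Polynomial.C ζ : ℂ[X]) : ℂ⟦X⟧) * (g' : ℂ⟦X⟧) * S)) := by
            ring
        _ = (f : ℂ⟦X⟧) - PowerSeries.C β * (U : ℂ⟦X⟧) := by
            rw [e3, e2, ← ha, ← e4]
    have hg'1 : g'.eval 1 ≠ 0 := by
      intro h
      apply hg1
      rw [← hgfact, eval_mul, h, mul_zero]
    have hroots' : ∀ z : ℂ, g'.IsRoot z →
        1 ≤ ‖z‖ ∧ g'.rootMultiplicity z < d := by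
      intro z hz
      have hzg : g.IsRoot z := by
        rw [IsRoot, ← hgfact, eval_mul, hz, mul_zero]
      refine ⟨(hroots z hzg).1, lt_of_le_of_lt ?_ (hroots z hzg).2⟩
      rw [Polynomial.le_rootMultiplicity_iff hg0]
      exact dvd_trans (pow_rootMultiplicity_dvd g' z) ⟨_, hgfact.symm.trans (mul_comm _ _)⟩
    have hIH := ih g' hdeg' f₁ d hd hg'1 hroots' a' hkey
    -- value computation
    have hval1 : f.eval 1 = (1 - ζ) * f₁.eval 1 := by
      have h5 := congrArg (eval 1) hf₁
      simp only [eval_sub, eval_mul, eval_C, eval_X, hU, eval_pow, eval_one, sub_self,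
        zero_pow (show d ≠ 0 by omega), zero_mul, mul_zero, sub_zero] at h5
      exact h5
    have hval2 : g.eval 1 = (1 - ζ) * g'.eval 1 := by
      rw [← hgfact, eval_mul, eval_sub, eval_X, eval_C]
    have hveq : f₁.eval 1 / ((d - 1).factorial * g'.eval 1)
        = f.eval 1 / ((d - 1).factorial * g.eval 1) := by
      rw [hval1, hval2]
      have hfac : ((d - 1).factorial : ℂ) ≠ 0 := by
        exact_mod_cast (d - 1).factorial_pos.ne'
      field_simp
    have hsmall : Tendsto (fun n : ℕ => (β * PowerSeries.coeff n S) / (n : ℂ) ^ (d - 1))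
        atTop (𝓝 0) := by
      apply aux_small m d hm1 hζmult ‖β‖
      intro n
      rw [hScoeff n]
      have h6 : ‖(-ζ)⁻¹‖ ≤ 1 := by
        have hne : ‖-ζ‖ = ‖ζ‖ := by simp
        rw [norm_inv, hne]
        exact inv_le_one_of_one_le₀ hζabs
      have h7 : ‖ζ⁻¹‖ ≤ 1 := by
        rw [norm_inv]
        exact inv_le_one_of_one_le₀ hζabs
      have hp1 : ‖(-ζ)⁻¹‖ ^ m ≤ 1 := pow_le_one₀ (by positivity) h6
      have hp2 : ‖ζ⁻¹‖ ^ n ≤ 1 := pow_le_one₀ (by positivity) h7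
      calc ‖β * ((-ζ)⁻¹ ^ m * (ζ⁻¹ ^ n * ((m - 1 + n).choose (m - 1) : ℂ)))‖
          = ‖β‖ * (‖(-ζ)⁻¹‖ ^ m *
              (‖ζ⁻¹‖ ^ n * ((m - 1 + n).choose (m - 1) : ℝ))) := by
            rw [norm_mul, norm_mul, norm_mul, norm_pow, norm_pow, Complex.norm_natCast]
        _ ≤ ‖β‖ * (1 * (1 * ((m - 1 + n).choose (m - 1) : ℝ))) := by
            gcongr <;> positivity
        _ = ‖β‖ * ((m - 1 + n).choose (m - 1) : ℝ) := by ring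
    have hfinal := hIH.add hsmall
    rw [add_zero, hveq] at hfinal
    apply hfinal.congr
    intro n
    rw [← add_div]
    congr 1
    simp [ha']


lemma aux_map_coe (p : ℝ[X]) :
    ((p.map (algebraMap ℝ ℂ) : ℂ[X]) : ℂ⟦X⟧)
      = PowerSeries.map (algebraMap ℝ ℂ) (p : ℝ⟦X⟧) := by
  ext n
  rw [Polynomial.coeff_coe, PowerSeries.coeff_map, Polynomial.coeff_coe, Polynomial.coeff_map]


/-- If `F(t) = ∑ a_n t^n = f(t)/((1-t)^d g(t))`, with `f(1), g(1) ≠ 0` and all complex roots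
of `g` on the unit circle with multiplicity `< d`, then the partial sums
`s_n = ∑_{m=0}^n a_m` satisfy `s_n / n^d → f(1)/(d! g(1))`. -/
theorem stmt_12 (f g : Polynomial ℝ) (d : ℕ) (hd : 1 ≤ d)
    (hf1 : f.eval 1 ≠ 0) (hg1 : g.eval 1 ≠ 0)
    (hroots : ∀ z : ℂ, (g.map (algebraMap ℝ ℂ)).IsRoot z →
      ‖z‖ = 1 ∧ (g.map (algebraMap ℝ ℂ)).rootMultiplicity z < d)
    (a : ℕ → ℝ)
    (ha : (f : PowerSeries ℝ) =
      (1 - PowerSeries.X) ^ d * (g : PowerSeries ℝ) * PowerSeries.mk a) :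
    Tendsto (fun n : ℕ => (∑ m ∈ Finset.range (n + 1), a m) / (n : ℝ) ^ d) atTop
      (nhds (f.eval 1 / (d.factorial * g.eval 1))) := by
  set s : ℕ → ℝ := fun n => ∑ m ∈ Finset.range (n + 1), a m with hs
  have hmks : (PowerSeries.mk a : ℝ⟦X⟧) = (1 - PowerSeries.X) * PowerSeries.mk s := by
    ext n
    rw [sub_mul, one_mul, map_sub]
    cases n with
    | zero =>
        simp [hs]
    | succ n =>
        rw [PowerSeries.coeff_mk, PowerSeries.coeff_succ_X_mul, PowerSeries.coeff_mk,
          PowerSeries.coeff_mk, hs]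
        simp [Finset.sum_range_succ]
  have ha2 : (f : ℝ⟦X⟧) = (1 - PowerSeries.X) ^ (d + 1) * (g : ℝ⟦X⟧) * PowerSeries.mk s := by
    rw [ha, hmks, pow_succ]
    ring
  have hmap := congrArg (PowerSeries.map (algebraMap ℝ ℂ)) ha2
  rw [map_mul, map_mul, map_pow, map_sub, map_one, PowerSeries.map_X, ← aux_map_coe,
    ← aux_map_coe] at hmap
  have hmapmk : PowerSeries.map (algebraMap ℝ ℂ) (PowerSeries.mk s)
      = PowerSeries.mk (fun n => (s n : ℂ)) := by
    ext n
    rw [PowerSeries.coeff_map, PowerSeries.coeff_mk, PowerSeries.coeff_mk]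
    rfl
  rw [hmapmk] at hmap
  have hG1 : (g.map (algebraMap ℝ ℂ)).eval 1 ≠ 0 := by
    rw [Polynomial.eval_one_map]
    intro h
    apply hg1
    have : (algebraMap ℝ ℂ) (eval 1 g) = Complex.ofReal (eval 1 g) := rfl
    rw [this] at h
    exact_mod_cast h
  have hroots' : ∀ z : ℂ, (g.map (algebraMap ℝ ℂ)).IsRoot z →
      1 ≤ ‖z‖ ∧ (g.map (algebraMap ℝ ℂ)).rootMultiplicity z < d + 1 := by
    intro z hz
    exact ⟨le_of_eq (hroots z hz).1.symm, Nat.lt_succ_of_lt (hroots z hz).2⟩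
  have h := key ((g.map (algebraMap ℝ ℂ)).natDegree) (g.map (algebraMap ℝ ℂ)) le_rfl
    (f.map (algebraMap ℝ ℂ)) (d + 1) (by omega) hG1 hroots' (fun n => (s n : ℂ)) hmap
  simp only [Nat.add_sub_cancel] at h
  have hval : (f.map (algebraMap ℝ ℂ)).eval 1
      / ((d.factorial : ℂ) * (g.map (algebraMap ℝ ℂ)).eval 1)
      = ((f.eval 1 / (d.factorial * g.eval 1) : ℝ) : ℂ) := by
    rw [Polynomial.eval_one_map, Polynomial.eval_one_map]
    push_cast
    rfl
  rw [hval] at h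
  rw [← Filter.tendsto_ofReal_iff]
  apply h.congr
  intro n
  push_cast
  rw [hs]
  push_cast
  ring
end

section
/- For every k ≥ 0, the function F(k) = ∑_{a=0}^∞ C(a+k-1, k-1)^2 t^a (a formal power series over ℚ(t), or rational function (viewing it as an element of ℚ(t))) satisfies the recurrence (k t^2 - 2k t + t^2 + k - 2t + 1)·F(k+2) + (-2k t - 2k - t - 1)·F(k+1) + k·F(k) = 0. -/
open PowerSeries

/-- `F(k) = ∑_{a=0}^∞ C(a+k-1,k-1)^2 t^a`, a formal power series over ℚ. -/
noncomputable def F (k : ℕ) : ℚ⟦X⟧ :=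
  PowerSeries.mk fun a : ℕ => ((binom ((a : ℤ) + k - 1) ((k : ℤ) - 1) : ℚ)) ^ 2

lemma binom_natCast_s16 (a b : ℕ) : binom (a : ℤ) (b : ℤ) = (a.choose b : ℤ) := by
  unfold binom
  split
  · simp
  · next h =>
    push_neg at h
    have hb := h (Int.natCast_nonneg b)
    rw [Nat.choose_eq_zero_of_lt (by exact_mod_cast hb)]
    simp

lemma F_zero : F 0 = 0 := by
  ext n; simp [F, binom]

lemma coeff_F (j a : ℕ) : coeff a (F (j + 1)) = ((a + j).choose j : ℚ) ^ 2 := by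
  simp only [F, coeff_mk]
  rw [show ((a : ℤ) + ((j + 1 : ℕ) : ℤ) - 1) = ((a + j : ℕ) : ℤ) by push_cast; ring,
      show (((j + 1 : ℕ) : ℤ) - 1) = ((j : ℕ) : ℤ) by push_cast; ring, binom_natCast_s16]
  norm_cast

lemma coeff_F2 (a : ℕ) : coeff a (F 2) = ((a : ℚ) + 1) ^ 2 := by
  have := coeff_F 1 a
  simpa [Nat.choose_one_right] using this

lemma coeff_F1 (a : ℕ) : coeff a (F 1) = 1 := by
  simpa using coeff_F 0 a

/-- `F(k)` satisfies Zeilberger's recurrence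
`(k t^2 - 2k t + t^2 + k - 2t + 1) F(k+2) + (-2k t - 2k - t - 1) F(k+1) + k F(k) = 0`. -/
theorem stmt_16 (k : ℕ) :
    (PowerSeries.C (k : ℚ) * X ^ 2 - 2 * PowerSeries.C (k : ℚ) * X + X ^ 2
        + PowerSeries.C (k : ℚ) - 2 * X + 1) * F (k + 2)
      + (-(2 * PowerSeries.C (k : ℚ) * X) - 2 * PowerSeries.C (k : ℚ) - X - 1) * F (k + 1)
      + PowerSeries.C (k : ℚ) * F k = 0 := by
  have h : (PowerSeries.C (k : ℚ) * X ^ 2 - 2 * PowerSeries.C (k : ℚ) * X + X ^ 2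
        + PowerSeries.C (k : ℚ) - 2 * X + 1) * F (k + 2)
      + (-(2 * PowerSeries.C (k : ℚ) * X) - 2 * PowerSeries.C (k : ℚ) - X - 1) * F (k + 1)
      + PowerSeries.C (k : ℚ) * F k
      = (PowerSeries.C (k : ℚ) * F (k + 2) + F (k + 2))
        - (PowerSeries.C (k : ℚ) * (X ^ 1 * F (k + 2))
           + PowerSeries.C (k : ℚ) * (X ^ 1 * F (k + 2))
           + X ^ 1 * F (k + 2) + X ^ 1 * F (k + 2))
        + (PowerSeries.C (k : ℚ) * (X ^ 2 * F (k + 2)) + X ^ 2 * F (k + 2))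
        - (PowerSeries.C (k : ℚ) * F (k + 1) + PowerSeries.C (k : ℚ) * F (k + 1) + F (k + 1))
        - (PowerSeries.C (k : ℚ) * (X ^ 1 * F (k + 1))
           + PowerSeries.C (k : ℚ) * (X ^ 1 * F (k + 1)) + X ^ 1 * F (k + 1))
        + PowerSeries.C (k : ℚ) * F k := by
    ring
  rw [h]; clear h
  ext n
  rcases k with _ | k
  · -- k = 0
    simp only [map_add, map_sub, coeff_C_mul, coeff_X_pow_mul', map_zero, F_zero,
      Nat.zero_add, Nat.cast_zero, zero_mul, mul_zero, PowerSeries.coeff_zero_eq_constantCoeff]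
    rcases n with _ | _ | n
    · norm_num [coeff_F2, coeff_F1]
    · norm_num [coeff_F2, coeff_F1]
    · have h1 : 1 ≤ n + 1 + 1 := by omega
      have h2 : 2 ≤ n + 1 + 1 := by omega
      simp only [h1, h2, if_true, show n + 1 + 1 - 1 = n + 1 from by omega,
        show n + 1 + 1 - 2 = n from by omega, coeff_F2, coeff_F1]
      push_cast
      ring
  · -- k + 1
    simp only [map_add, map_sub, coeff_C_mul, coeff_X_pow_mul', coeff_F, map_zero]
    rcases n with _ | _ | n
    · norm_num [Nat.choose_self]
    · norm_num
      rw [show 0 + 1 + (k + 2) = (k + 2) + 1 from by omega,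
          show 0 + 1 + (k + 1) = (k + 1) + 1 from by omega,
          show 0 + 1 + k = k + 1 from by omega]
      norm_num [Nat.choose_self, Nat.choose_succ_self_right]
      ring
    · have h1 : 1 ≤ n + 1 + 1 := by omega
      have h2 : 2 ≤ n + 1 + 1 := by omega
      simp only [h1, h2, if_true]
      rw [show n + 1 + 1 - 1 = n + 1 from by omega, show n + 1 + 1 - 2 = n from by omega,
          show n + 1 + 1 + (k + 2) = n + k + 4 from by omega,
          show n + 1 + (k + 2) = n + k + 3 from by omega,
          show n + (k + 2) = n + k + 2 from by omega,
          show n + 1 + 1 + (k + 1) = n + k + 3 from by omega,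
          show n + 1 + (k + 1) = n + k + 2 from by omega,
          show n + 1 + 1 + k = n + k + 2 from by omega]
      have hk1 : ((k : ℚ) + 1) ≠ 0 := by positivity
      have hk2 : ((k : ℚ) + 2) ≠ 0 := by positivity
      have r1 : (((n + k + 2).choose (k + 1) : ℚ)) * ((k : ℚ) + 1)
          = ((n + k + 2).choose k : ℚ) * ((n : ℚ) + 2) := by
        have := Nat.choose_succ_right_eq (n + k + 2) k
        rw [show n + k + 2 - k = n + 2 from by omega] at this
        exact_mod_cast this
      have r2 : (((n + k + 3).choose (k + 1) : ℚ)) * ((k : ℚ) + 1)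
          = ((n + k + 2).choose k : ℚ) * ((n : ℚ) + (k : ℚ) + 3) := by
        have := Nat.add_one_mul_choose_eq (n + k + 2) k
        rw [show n + k + 2 + 1 = n + k + 3 from by omega, Nat.mul_comm] at this
        exact_mod_cast this.symm
      have r3 : (((n + k + 2).choose (k + 2) : ℚ)) * ((k : ℚ) + 2)
          = ((n + k + 2).choose (k + 1) : ℚ) * ((n : ℚ) + 1) := by
        have := Nat.choose_succ_right_eq (n + k + 2) (k + 1)
        rw [show n + k + 2 - (k + 1) = n + 1 from by omega] at this
        rw [show k + 1 + 1 = k + 2 from rfl] at this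
        exact_mod_cast this
      have r4 : (((n + k + 3).choose (k + 2) : ℚ)) * ((k : ℚ) + 2)
          = ((n + k + 3).choose (k + 1) : ℚ) * ((n : ℚ) + 2) := by
        have := Nat.choose_succ_right_eq (n + k + 3) (k + 1)
        rw [show n + k + 3 - (k + 1) = n + 2 from by omega] at this
        rw [show k + 1 + 1 = k + 2 from rfl] at this
        exact_mod_cast this
      have r5 : (((n + k + 4).choose (k + 2) : ℚ)) * ((k : ℚ) + 2)
          = ((n + k + 3).choose (k + 1) : ℚ) * ((n : ℚ) + (k : ℚ) + 4) := by
        have := Nat.add_one_mul_choose_eq (n + k + 3) (k + 1)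
        rw [show n + k + 3 + 1 = n + k + 4 from by omega,
            show k + 1 + 1 = k + 2 from rfl] at this
        rw [Nat.mul_comm] at this
        exact_mod_cast this.symm
      have e1 : ((n + k + 2).choose (k + 1) : ℚ)
          = ((n + k + 2).choose k : ℚ) * ((n : ℚ) + 2) / ((k : ℚ) + 1) := by
        field_simp
        linear_combination r1
      have e2 : ((n + k + 3).choose (k + 1) : ℚ)
          = ((n + k + 2).choose k : ℚ) * ((n : ℚ) + (k : ℚ) + 3) / ((k : ℚ) + 1) := by
        field_simp
        linear_combination r2
      have e3 : ((n + k + 2).choose (k + 2) : ℚ)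
          = ((n + k + 2).choose k : ℚ) * ((n : ℚ) + 2) * ((n : ℚ) + 1)
            / (((k : ℚ) + 1) * ((k : ℚ) + 2)) := by
        field_simp
        linear_combination ((n : ℚ) + 1) * r1 + ((k : ℚ) + 1) * r3
      have e4 : ((n + k + 3).choose (k + 2) : ℚ)
          = ((n + k + 2).choose k : ℚ) * ((n : ℚ) + (k : ℚ) + 3) * ((n : ℚ) + 2)
            / (((k : ℚ) + 1) * ((k : ℚ) + 2)) := by
        field_simp
        linear_combination ((n : ℚ) + 2) * r2 + ((k : ℚ) + 1) * r4
      have e5 : ((n + k + 4).choose (k + 2) : ℚ)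
          = ((n + k + 2).choose k : ℚ) * ((n : ℚ) + (k : ℚ) + 3) * ((n : ℚ) + (k : ℚ) + 4)
            / (((k : ℚ) + 1) * ((k : ℚ) + 2)) := by
        field_simp
        linear_combination ((n : ℚ) + (k : ℚ) + 4) * r2 + ((k : ℚ) + 1) * r5
      rw [e5, e4, e3, e2, e1]
      push_cast
      field_simp
      ring
end
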